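/- arXiv:0709.2775 — 5 statements merged into one kernel-verified Lean document; each statement's English description precedes it below -/
import Mathlib

section
/- For a solution (x_k(t)) of the system dx_k/dt = (s(M₁(x)-k)-λ)x_k + λx_{k-1} with x_0(0) > 0 (under the regularity assumptions guaranteeing the cumulant solution formula), the frequency of the best class satisfies x_0(t) = x_0(0) · exp(-(λ/s)(1-e^{-st})) / (Σ_{k≥0} x_k(0) e^{-stk}). -/
open Finset in
private lemma hasDerivAt_exp_const_mul (c t : ℝ) :
    HasDerivAt (fun u : ℝ => Real.exp (c * u)) (c * Real.exp (c * t)) t := by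
  have h1 : HasDerivAt (fun y : ℝ => c * y) c t := by
    simpa using (hasDerivAt_id t).const_mul c
  simpa [Function.comp_def, mul_comm] using (Real.hasDerivAt_exp (c * t)).comp t h1

private lemma const_of_deriv_zero_on {U : Set ℝ} (hU : Convex ℝ U) {w : ℝ → ℝ}
    (hw : ∀ t ∈ U, HasDerivAt w 0 t) {a b : ℝ} (ha : a ∈ U) (hb : b ∈ U) :
    w a = w b := by
  have main : ∀ a b : ℝ, a ∈ U → b ∈ U → a ≤ b → w b = w a := by
    intro a b ha hb hab
    have hIcc : Set.Icc a b ⊆ U := hU.ordConnected.out ha hb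
    have := constant_of_has_deriv_right_zero (f := w) (a := a) (b := b)
      (fun x hx => ((hw x (hIcc hx)).continuousAt).continuousWithinAt)
      (fun x hx => ((hw x (hIcc ⟨hx.1, hx.2.le⟩)).hasDerivWithinAt))
    exact this b ⟨hab, le_rfl⟩
  rcases le_total a b with h | h
  · exact (main a b ha hb h).symm
  · exact main b a hb ha h

noncomputable def betaFn (s lam : ℝ) (t : ℝ) : ℝ := lam / s * (Real.exp (s * t) - 1)

noncomputable def psiFn (s lam : ℝ) (c : ℕ → ℝ) (k : ℕ) (t : ℝ) : ℝ :=
  ∑ j ∈ Finset.range (k + 1), c j * betaFn s lam t ^ (k - j) / (Nat.factorial (k - j))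

private lemma betaFn_hasDeriv (s lam : ℝ) (hs : s ≠ 0) (t : ℝ) :
    HasDerivAt (betaFn s lam) (lam * Real.exp (s * t)) t := by
  have := (((hasDerivAt_exp_const_mul s t).sub_const 1).const_mul (lam / s))
  refine this.congr_deriv (Eq.symm ?_)
  field_simp

private lemma betaFn_zero (s lam : ℝ) : betaFn s lam 0 = 0 := by
  simp [betaFn]

private lemma psiFn_zero (s lam : ℝ) (c : ℕ → ℝ) (k : ℕ) : psiFn s lam c k 0 = c k := by
  unfold psiFn
  rw [Finset.sum_eq_single k]
  · simp [betaFn_zero]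
  · intro j hj hjk
    have h1 : k - j ≠ 0 := by
      have := Finset.mem_range.mp hj; omega
    simp [betaFn_zero, zero_pow h1]
  · intro h; exact absurd (Finset.self_mem_range_succ k) h

private lemma psiFn_hasDeriv (s lam : ℝ) (hs : s ≠ 0) (c : ℕ → ℝ) (k : ℕ) (t : ℝ) :
    HasDerivAt (psiFn s lam c (k + 1)) (lam * Real.exp (s * t) * psiFn s lam c k t) t := by
  have hterm : ∀ j ∈ Finset.range (k + 2),
      HasDerivAt (fun u => c j * betaFn s lam u ^ (k + 1 - j) / (Nat.factorial (k + 1 - j)))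
        (c j * ((k + 1 - j : ℕ) * betaFn s lam t ^ (k + 1 - j - 1) *
          (lam * Real.exp (s * t))) / (Nat.factorial (k + 1 - j))) t := by
    intro j _
    exact (((betaFn_hasDeriv s lam hs t).pow _).const_mul (c j)).div_const _
  have hsum := HasDerivAt.fun_sum hterm
  refine hsum.congr_deriv (Eq.symm ?_)
  rw [Finset.sum_range_succ]
  simp only [Nat.sub_self, Nat.cast_zero, zero_mul, mul_zero, zero_div, add_zero]
  unfold psiFn
  rw [Finset.mul_sum]
  apply Finset.sum_congr rfl
  intro j hj
  have hjk : j ≤ k := Nat.lt_succ_iff.mp (Finset.mem_range.mp hj)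
  have h1 : k + 1 - j = (k - j) + 1 := by omega
  have h2 : k + 1 - j - 1 = k - j := by omega
  rw [h1, Nat.factorial_succ, Nat.add_sub_cancel]
  generalize (k - j : ℕ) = m
  have hfac : ((Nat.factorial m : ℝ)) ≠ 0 := Nat.cast_ne_zero.mpr (Nat.factorial_ne_zero _)
  have hm1 : ((m : ℝ) + 1) ≠ 0 := by positivity
  push_cast
  field_simp
private lemma ratchet_core
    (s lam : ℝ) (hs : 0 < s)
    (x : ℕ → ℝ → ℝ) (M : ℝ → ℝ)
    (hnn : ∀ k t, 0 ≤ x k t)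
    (hprob : ∀ t, HasSum (fun k => x k t) 1)
    (hx00 : 0 < x 0 0)
    (hmom : ∀ (t ξ : ℝ), Summable (fun k : ℕ => x k t * Real.exp (ξ * k)))
    (hODE : ∀ k t, HasDerivAt (fun u => x k u)
      ((s * (M t - k) - lam) * x k t +
        lam * (if k = 0 then 0 else x (k - 1) t)) t)
    (U : Set ℝ) (hUc : Convex ℝ U) (hU0 : (0:ℝ) ∈ U)
    (hpos : ∀ t ∈ U, 0 < x 0 t) :
    ∀ t ∈ U, x 0 t =
      x 0 0 * Real.exp (-(lam / s) * (1 - Real.exp (-(s * t)))) /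
        (∑' k : ℕ, x k 0 * Real.exp (-(s * t) * k)) := by
  have hsne : s ≠ 0 := hs.ne'
  set c : ℕ → ℝ := fun j => x j 0 / x 0 0 with hc
  -- the key induction: explicit solution of the ratio ODE system
  have key : ∀ k : ℕ, ∀ t ∈ U, Real.exp (s * k * t) * (x k t / x 0 t) = psiFn s lam c k t := by
    intro k
    induction k with
    | zero =>
      intro t ht
      have : psiFn s lam c 0 t = 1 := by
        simp [psiFn, hc, div_self hx00.ne']
      rw [this]
      simp [div_self (hpos t ht).ne']
    | succ k ih =>
      -- the difference has zero derivative on U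
      set w : ℝ → ℝ := fun u =>
        Real.exp (s * (k + 1 : ℕ) * u) * (x (k + 1) u / x 0 u) - psiFn s lam c (k + 1) u with hw
      have hwderiv : ∀ t ∈ U, HasDerivAt w 0 t := by
        intro t ht
        have hx0 : x 0 t ≠ 0 := (hpos t ht).ne'
        have hd0 : HasDerivAt (fun u => x 0 u) ((s * M t - lam) * x 0 t) t := by
          have := hODE 0 t
          simpa using this
        have hdk : HasDerivAt (fun u => x (k + 1) u)
            ((s * (M t - (k + 1 : ℕ)) - lam) * x (k + 1) t + lam * x k t) t := by
          have := hODE (k + 1) t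
          simpa using this
        have hr : HasDerivAt (fun u => x (k + 1) u / x 0 u)
            (-(s * (k + 1 : ℕ)) * (x (k + 1) t / x 0 t) + lam * (x k t / x 0 t)) t := by
          have := hdk.div hd0 hx0
          refine this.congr_deriv (Eq.symm ?_)
          field_simp
          ring
        have hexp := hasDerivAt_exp_const_mul (s * (k + 1 : ℕ)) t
        have hprod := hexp.mul hr
        have hψ := psiFn_hasDeriv s lam hsne c k t
        have hsub := hprod.sub hψ
        refine hsub.congr_deriv (Eq.symm ?_)
        rw [← ih t ht]
        have eadd : Real.exp (s * (k + 1 : ℕ) * t)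
            = Real.exp (s * t) * Real.exp (s * (k : ℕ) * t) := by
          rw [← Real.exp_add]; congr 1; push_cast; ring
        rw [eadd]
        ring
      intro t ht
      have hconst : w t = w 0 := const_of_deriv_zero_on hUc hwderiv ht hU0
      have hw0 : w 0 = 0 := by
        simp only [hw, psiFn_zero, hc, mul_zero, Real.exp_zero, one_mul]
        ring
      have : w t = 0 := hconst.trans hw0
      simp only [hw] at this
      linarith
  -- now sum up
  intro t ht
  set D : ℝ := ∑' k : ℕ, x k 0 * Real.exp (-(s * t) * k) with hD
  set a : ℝ := lam / s * (1 - Real.exp (-(s * t))) with ha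
  set u : ℕ → ℝ := fun j => x j 0 * Real.exp (-(s * t) * j) / x 0 0 with hu
  set v : ℕ → ℝ := fun m => a ^ m / (Nat.factorial m) with hv
  have hu_sum : Summable u := (hmom 0 (-(s * t))).div_const _
  have hv_sum : Summable v := Real.summable_pow_div_factorial a
  have hu_nn : ∀ j, 0 ≤ u j := fun j =>
    div_nonneg (mul_nonneg (hnn j 0) (Real.exp_nonneg _)) hx00.le
  have hnu : Summable fun j => ‖u j‖ := by
    refine hu_sum.congr fun j => ?_
    rw [Real.norm_eq_abs, abs_of_nonneg (hu_nn j)]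
  have hnv : Summable fun m => ‖v m‖ := by
    refine (Real.summable_pow_div_factorial |a|).congr fun m => ?_
    rw [hv, Real.norm_eq_abs, abs_div, abs_pow, Nat.abs_cast]
  have haE : a = Real.exp (-(s * t)) * betaFn s lam t := by
    have h1 : Real.exp (-(s * t)) * Real.exp (s * t) = 1 := by
      rw [← Real.exp_add]; simp
    rw [ha, betaFn]
    linear_combination (-(lam / s)) * h1
  -- expression of the ratios as a convolution
  have h_rr : ∀ n : ℕ, x n t / x 0 t = ∑ j ∈ Finset.range (n + 1), u j * v (n - j) := by
    intro n
    have hk := key n t ht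
    have hE : Real.exp (-(s * n * t)) * Real.exp (s * n * t) = 1 := by
      rw [← Real.exp_add]; simp
    have step1 : x n t / x 0 t = Real.exp (-(s * n * t)) * psiFn s lam c n t := by
      rw [← hk, ← mul_assoc, hE, one_mul]
    rw [step1]
    unfold psiFn
    rw [Finset.mul_sum]
    apply Finset.sum_congr rfl
    intro j hj
    have hjn : j ≤ n := Nat.lt_succ_iff.mp (Finset.mem_range.mp hj)
    have hm : (n : ℝ) = (j : ℝ) + ((n - j : ℕ) : ℝ) := by
      have := Nat.add_sub_cancel' hjn
      exact_mod_cast (congrArg (Nat.cast : ℕ → ℝ) this).symm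
    have hEsplit : Real.exp (-(s * n * t))
        = Real.exp (-(s * t) * j) * Real.exp (-(s * t)) ^ ((n - j : ℕ)) := by
      rw [← Real.exp_nat_mul, ← Real.exp_add]
      congr 1
      rw [hm]; ring
    rw [hEsplit]
    simp only [hu, hv, hc, haE, mul_pow]
    ring
  have hsum_rr : HasSum (fun n => x n t / x 0 t) (1 / x 0 t) := (hprob t).div_const _
  have hcauchy : (∑' j, u j) * (∑' m, v m)
      = ∑' n, ∑ j ∈ Finset.range (n + 1), u j * v (n - j) :=
    tsum_mul_tsum_eq_tsum_sum_range_of_summable_norm hnu hnv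
  have h2 : 1 / x 0 t = (∑' j, u j) * (∑' m, v m) := by
    rw [hcauchy, ← hsum_rr.tsum_eq]
    exact tsum_congr h_rr
  have hu_val : (∑' j, u j) = D / x 0 0 := by
    rw [hu, hD]; exact tsum_div_const
  have hv_val : (∑' m, v m) = Real.exp a := by
    rw [Real.exp_eq_exp_ℝ, NormedSpace.exp_eq_tsum_div]
  have hD_pos : 0 < D := by
    have hle : x 0 0 * Real.exp (-(s * t) * (0 : ℕ)) ≤ D :=
      Summable.le_tsum (hmom 0 (-(s * t))) 0
        (fun j _ => mul_nonneg (hnn j 0) (Real.exp_nonneg _))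
    simp only [Nat.cast_zero, mul_zero, Real.exp_zero, mul_one] at hle
    linarith
  have hx0t : x 0 t ≠ 0 := (hpos t ht).ne'
  have hexp_ne : Real.exp a ≠ 0 := Real.exp_ne_zero a
  rw [hu_val, hv_val] at h2
  have hgoal : Real.exp (-(lam / s) * (1 - Real.exp (-(s * t)))) = (Real.exp a)⁻¹ := by
    rw [← Real.exp_neg]
    congr 1
    rw [ha]; ring
  rw [hgoal]
  field_simp at h2 ⊢
  nlinarith [h2, hD_pos, Real.exp_pos a]

/-- Explicit formula for the frequency of the best class in the
infinite-population ratchet dynamics. -/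
theorem best_class_formula
    (s lam : ℝ) (hs : 0 < s) (hlam : 0 < lam)
    (x : ℕ → ℝ → ℝ) (M : ℝ → ℝ)
    (hnn : ∀ k t, 0 ≤ x k t)
    (hprob : ∀ t, HasSum (fun k => x k t) 1)
    (hx00 : 0 < x 0 0)
    (hmom : ∀ (t ξ : ℝ), Summable (fun k : ℕ => x k t * Real.exp (ξ * k)))
    (hM : ∀ t, HasSum (fun k : ℕ => (k : ℝ) * x k t) (M t))
    (hODE : ∀ k t, HasDerivAt (fun u => x k u)
      ((s * (M t - k) - lam) * x k t +
        lam * (if k = 0 then 0 else x (k - 1) t)) t) :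
    ∀ t : ℝ, x 0 t =
      x 0 0 * Real.exp (-(lam / s) * (1 - Real.exp (-(s * t)))) /
        (∑' k : ℕ, x k 0 * Real.exp (-(s * t) * k)) := by
  have hx0cont : Continuous (fun t => x 0 t) := by
    rw [continuous_iff_continuousAt]
    exact fun t => (hODE 0 t).continuousAt
  have hMnn : ∀ t, 0 ≤ M t := fun t =>
    (hM t).nonneg fun k => mul_nonneg (Nat.cast_nonneg k) (hnn k t)
  -- forward positivity via monotonicity of e^{lam t} x_0 t
  have hg : ∀ t, HasDerivAt (fun u => Real.exp (lam * u) * x 0 u)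
      (s * M t * (Real.exp (lam * t) * x 0 t)) t := by
    intro t
    have hd0 : HasDerivAt (fun u => x 0 u) ((s * M t - lam) * x 0 t) t := by
      simpa using hODE 0 t
    have := (hasDerivAt_exp_const_mul lam t).mul hd0
    refine this.congr_deriv (Eq.symm ?_)
    ring
  have hgmono : Monotone (fun t => Real.exp (lam * t) * x 0 t) := by
    apply monotone_of_deriv_nonneg
    · exact fun t => (hg t).differentiableAt
    · intro t
      rw [(hg t).deriv]
      have := hnn 0 t
      have := hMnn t
      positivity
  have hpos_fwd : ∀ t : ℝ, 0 ≤ t → 0 < x 0 t := by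
    intro t htnn
    have h1 : Real.exp (lam * 0) * x 0 0 ≤ Real.exp (lam * t) * x 0 t :=
      hgmono (by linarith)
    simp only [mul_zero, Real.exp_zero, one_mul] at h1
    nlinarith [Real.exp_pos (lam * t), hx00]
  -- positivity everywhere
  have hpos_all : ∀ t : ℝ, 0 < x 0 t := by
    by_contra hcon
    push_neg at hcon
    obtain ⟨t0, ht0⟩ := hcon
    have ht0z : x 0 t0 = 0 := le_antisymm ht0 (hnn 0 t0)
    set A : Set ℝ := {τ : ℝ | x 0 τ = 0} with hA
    have hAne : A.Nonempty := ⟨t0, ht0z⟩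
    have hAneg : ∀ τ ∈ A, τ < 0 := by
      intro τ hτ
      by_contra hge
      push_neg at hge
      exact absurd hτ (ne_of_gt (hpos_fwd τ hge))
    have hAbdd : BddAbove A := ⟨0, fun τ hτ => (hAneg τ hτ).le⟩
    have hAclosed : IsClosed A := isClosed_eq hx0cont continuous_const
    set b : ℝ := sSup A with hb
    have hbA : b ∈ A := hAclosed.csSup_mem hAne hAbdd
    have hbneg : b < 0 := hAneg b hbA
    have hposU : ∀ τ ∈ Set.Ioi b, 0 < x 0 τ := by
      intro τ hτ
      rcases le_or_gt 0 τ with h | h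
      · exact hpos_fwd τ h
      · rcases lt_or_eq_of_le (hnn 0 τ) with h' | h'
        · exact h'
        · exact absurd (le_csSup hAbdd h'.symm) (not_le.mpr hτ)
    have hform := ratchet_core s lam hs x M hnn hprob hx00 hmom hODE
      (Set.Ioi b) (convex_Ioi b) hbneg
      hposU
    -- D is monotone comparison
    have hDle : ∀ τ ∈ Set.Ioi b, (∑' k : ℕ, x k 0 * Real.exp (-(s * τ) * k))
        ≤ ∑' k : ℕ, x k 0 * Real.exp (-(s * b) * k) := by
      intro τ hτ
      apply Summable.tsum_le_tsum _ (hmom 0 _) (hmom 0 _)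
      intro k
      apply mul_le_mul_of_nonneg_left _ (hnn k 0)
      apply Real.exp_le_exp.mpr
      have hbτ : b ≤ τ := (Set.mem_Ioi.mp hτ).le
      have hprod : 0 ≤ s * (k : ℝ) * (τ - b) :=
        mul_nonneg (mul_nonneg hs.le (Nat.cast_nonneg k)) (by linarith)
      nlinarith [hprod]
    have hDb_pos : 0 < ∑' k : ℕ, x k 0 * Real.exp (-(s * b) * k) := by
      have hle : x 0 0 * Real.exp (-(s * b) * (0 : ℕ)) ≤ _ :=
        Summable.le_tsum (hmom 0 (-(s * b))) 0
          (fun j _ => mul_nonneg (hnn j 0) (Real.exp_nonneg _))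
      simp only [Nat.cast_zero, mul_zero, Real.exp_zero, mul_one] at hle
      linarith
    -- lower bound on x 0 on Ioi b
    have hlow : ∀ τ ∈ Set.Ioi b,
        x 0 0 * Real.exp (-(lam / s) * (1 - Real.exp (-(s * τ)))) /
          (∑' k : ℕ, x k 0 * Real.exp (-(s * b) * k)) ≤ x 0 τ := by
      intro τ hτ
      rw [hform τ hτ]
      have hDτ_pos : 0 < ∑' k : ℕ, x k 0 * Real.exp (-(s * τ) * k) := by
        have hle : x 0 0 * Real.exp (-(s * τ) * (0 : ℕ)) ≤ _ :=
          Summable.le_tsum (hmom 0 (-(s * τ))) 0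
            (fun j _ => mul_nonneg (hnn j 0) (Real.exp_nonneg _))
        simp only [Nat.cast_zero, mul_zero, Real.exp_zero, mul_one] at hle
        linarith
      exact div_le_div_of_nonneg_left
        (by positivity) hDτ_pos (hDle τ hτ)
    -- take the limit τ → b⁺
    have hlim1 : Filter.Tendsto (fun τ : ℝ =>
        x 0 0 * Real.exp (-(lam / s) * (1 - Real.exp (-(s * τ)))) /
          (∑' k : ℕ, x k 0 * Real.exp (-(s * b) * k))) (nhdsWithin b (Set.Ioi b))
        (nhds (x 0 0 * Real.exp (-(lam / s) * (1 - Real.exp (-(s * b)))) /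
          (∑' k : ℕ, x k 0 * Real.exp (-(s * b) * k)))) := by
      apply Filter.Tendsto.mono_left _ nhdsWithin_le_nhds
      apply Continuous.tendsto
      fun_prop
    have hlim2 : Filter.Tendsto (fun τ => x 0 τ) (nhdsWithin b (Set.Ioi b))
        (nhds (x 0 b)) :=
      (hx0cont.tendsto b).mono_left nhdsWithin_le_nhds
    have hineq : x 0 0 * Real.exp (-(lam / s) * (1 - Real.exp (-(s * b)))) /
          (∑' k : ℕ, x k 0 * Real.exp (-(s * b) * k)) ≤ x 0 b := by
      refine le_of_tendsto_of_tendsto hlim1 hlim2 ?_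
      filter_upwards [self_mem_nhdsWithin] with τ hτ using hlow τ hτ
    rw [hbA] at hineq
    have : 0 < x 0 0 * Real.exp (-(lam / s) * (1 - Real.exp (-(s * b)))) /
        (∑' k : ℕ, x k 0 * Real.exp (-(s * b) * k)) := by positivity
    linarith
  intro t
  exact ratchet_core s lam hs x M hnn hprob hx00 hmom hODE
    Set.univ convex_univ (Set.mem_univ 0) (fun τ _ => hpos_all τ) t (Set.mem_univ t)
end

section
/- For a solution (x_k(t)) of the system dx_k/dt = (s(M₁(x)-k)-λ)x_k + λx_{k-1} (under the regularity assumptions of the cumulant solution), the mean satisfies M₁(x(t)) = -∂/∂ξ [log Σ_{k≥0} x_k(0) e^{-ξk}] evaluated at ξ = st, plus (λ/s)(1 - e^{-st}). -/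
section Aux
variable (s lam : ℝ) (x : ℕ → ℝ → ℝ) (M : ℝ → ℝ)

/-- Uniform-in-time bound from monotonicity of `x k t * exp((s k + lam) t)`. -/
lemma ratchet_bound (hs : 0 < s) (hlam : 0 < lam)
    (hnn : ∀ k t, 0 ≤ x k t)
    (hM : ∀ t, HasSum (fun k : ℕ => (k : ℝ) * x k t) (M t))
    (hODE : ∀ k t, HasDerivAt (fun u => x k u)
      ((s * (M t - k) - lam) * x k t +
        lam * (if k = 0 then 0 else x (k - 1) t)) t)
    (k : ℕ) {t T : ℝ} (h : t ≤ T) :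
    x k t ≤ x k T * Real.exp ((s * k + lam) * (T - t)) := by
  have hMnn : ∀ u, 0 ≤ M u := fun u =>
    hasSum_le (fun i => mul_nonneg (Nat.cast_nonneg i) (hnn i u)) hasSum_zero (hM u)
  set f : ℝ → ℝ := fun u => x k u * Real.exp ((s * k + lam) * u) with hf
  have hder : ∀ u, HasDerivAt f
      ((s * M u * x k u + lam * (if k = 0 then 0 else x (k - 1) u))
        * Real.exp ((s * k + lam) * u)) u := by
    intro u
    have he : HasDerivAt (fun u : ℝ => Real.exp ((s * k + lam) * u))
        (Real.exp ((s * k + lam) * u) * (s * k + lam)) u := by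
      have : HasDerivAt (fun u : ℝ => (s * k + lam) * u) (s * k + lam) u :=
        (hasDerivAt_id u).const_mul _ |>.congr_deriv (mul_one _)
      exact this.exp
    have := (hODE k u).mul he
    exact this.congr_deriv (by ring)
  have hmono : Monotone f := by
    apply monotone_of_deriv_nonneg
    · exact fun u => (hder u).differentiableAt
    · intro u
      rw [(hder u).deriv]
      have h1 : 0 ≤ s * M u * x k u :=
        mul_nonneg (mul_nonneg hs.le (hMnn u)) (hnn k u)
      have h2 : 0 ≤ lam * (if k = 0 then 0 else x (k - 1) u) := by
        split_ifs with hk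
        · simp
        · exact mul_nonneg hlam.le (hnn _ _)
      exact mul_nonneg (add_nonneg h1 h2) (Real.exp_pos _).le
  have := hmono h
  simp only [hf] at this
  have hexp : (0:ℝ) < Real.exp ((s * k + lam) * t) := Real.exp_pos _
  calc x k t = x k t * Real.exp ((s * k + lam) * t) / Real.exp ((s * k + lam) * t) := by
        field_simp
    _ ≤ x k T * Real.exp ((s * k + lam) * T) / Real.exp ((s * k + lam) * t) := by
        gcongr
    _ = x k T * Real.exp ((s * k + lam) * (T - t)) := by
        rw [mul_div_assoc, ← Real.exp_sub]
        congr 1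
        ring_nf

end Aux

section Core
variable {s lam : ℝ} {x : ℕ → ℝ → ℝ} {M : ℝ → ℝ}

/-- `k ≤ e^k` helper: `x k t * exp(a*k)` summability with a polynomial factor. -/
lemma ratchet_summable_mul (hnn : ∀ k t, 0 ≤ x k t)
    (hmom : ∀ (t ξ : ℝ), Summable (fun k : ℕ => x k t * Real.exp (ξ * k)))
    (t a : ℝ) : Summable (fun k : ℕ => (k : ℝ) * (x k t * Real.exp (a * k))) := by
  refine Summable.of_nonneg_of_le
      (fun k => mul_nonneg (Nat.cast_nonneg k) (mul_nonneg (hnn k t) (Real.exp_pos _).le))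
      (fun k => ?_) (hmom t (a + 1))
  have hk : (k : ℝ) ≤ Real.exp k := le_trans (by linarith [Nat.cast_nonneg (α := ℝ) k]) (Real.add_one_le_exp (k:ℝ))
  calc (k : ℝ) * (x k t * Real.exp (a * k))
      ≤ Real.exp k * (x k t * Real.exp (a * k)) :=
        mul_le_mul_of_nonneg_right hk (mul_nonneg (hnn k t) (Real.exp_pos _).le)
    _ = x k t * Real.exp ((a + 1) * k) := by
        rw [add_mul, one_mul, Real.exp_add]; ring

/-- The key derivative lemma: along the characteristic family, the generating
function series can be differentiated term by term in `t`. -/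
lemma ratchet_hasDerivAt_A (hs : 0 < s) (hlam : 0 < lam)
    (hnn : ∀ k t, 0 ≤ x k t)
    (hmom : ∀ (t ξ : ℝ), Summable (fun k : ℕ => x k t * Real.exp (ξ * k)))
    (hM : ∀ t, HasSum (fun k : ℕ => (k : ℝ) * x k t) (M t))
    (hODE : ∀ k t, HasDerivAt (fun u => x k u)
      ((s * (M t - k) - lam) * x k t +
        lam * (if k = 0 then 0 else x (k - 1) t)) t)
    (c t0 : ℝ) :
    HasDerivAt (fun t => ∑' k : ℕ, x k t * Real.exp ((s * t - c) * k))
      ((s * M t0 - lam + lam * Real.exp (s * t0 - c)) *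
        ∑' k : ℕ, x k t0 * Real.exp ((s * t0 - c) * k)) t0 := by
  have hMnn : ∀ u, 0 ≤ M u := fun u =>
    hasSum_le (fun i => mul_nonneg (Nat.cast_nonneg i) (hnn i u)) hasSum_zero (hM u)
  set T : ℝ := t0 + 1 with hT
  set B : ℝ := s * (|t0| + 1) + |c| with hB
  set CM : ℝ := ∑' k : ℕ, (k : ℝ) * (x k T * Real.exp ((2 * s) * k)) * Real.exp (2 * lam)
    with hCM
  -- summability of the CM-series
  have hCMsum : Summable (fun k : ℕ => (k : ℝ) * (x k T * Real.exp ((2 * s) * k)) * Real.exp (2 * lam)) :=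
    (ratchet_summable_mul hnn hmom T (2 * s)).mul_right _
  have hCMnn : 0 ≤ CM :=
    tsum_nonneg fun k => mul_nonneg (mul_nonneg (Nat.cast_nonneg k)
      (mul_nonneg (hnn k T) (Real.exp_pos _).le)) (Real.exp_pos _).le
  -- pointwise bound on x over the interval
  have hxb : ∀ (k : ℕ) (t : ℝ), t ∈ Set.Ioo (t0 - 1) (t0 + 1) →
      x k t ≤ x k T * Real.exp (2 * (s * k + lam)) := by
    intro k t ht
    have h1 : x k t ≤ x k T * Real.exp ((s * k + lam) * (T - t)) :=
      ratchet_bound s lam x M hs hlam hnn hM hODE k (le_of_lt (by simpa [hT] using ht.2))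
    refine h1.trans (mul_le_mul_of_nonneg_left (Real.exp_le_exp.2 ?_) (hnn k T))
    have h2 : T - t ≤ 2 := by simp only [hT]; linarith [ht.1]
    have hpos : 0 ≤ s * k + lam := by positivity
    calc (s * k + lam) * (T - t) ≤ (s * k + lam) * 2 := mul_le_mul_of_nonneg_left h2 hpos
      _ = 2 * (s * k + lam) := by ring
  -- bound on M over the interval
  have hMb : ∀ t ∈ Set.Ioo (t0 - 1) (t0 + 1), M t ≤ CM := by
    intro t ht
    rw [← (hM t).tsum_eq]
    apply Summable.tsum_le_tsum _ (hM t).summable hCMsum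
    intro k
    calc (k : ℝ) * x k t ≤ (k : ℝ) * (x k T * Real.exp (2 * (s * k + lam))) := by
          gcongr
          exact hxb k t ht
      _ = (k : ℝ) * (x k T * Real.exp ((2 * s) * k)) * Real.exp (2 * lam) := by
          rw [mul_add, Real.exp_add]; ring_nf
  -- bound on the exponential factor
  have hEb : ∀ (k : ℕ) (t : ℝ), t ∈ Set.Ioo (t0 - 1) (t0 + 1) →
      Real.exp ((s * t - c) * k) ≤ Real.exp (B * k) := by
    intro k t ht
    apply Real.exp_le_exp.2
    have h1 : s * t - c ≤ B := by
      have h2 : |t| ≤ |t0| + 1 := by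
        rw [abs_le] at *
        cases' abs_le.1 (le_refl |t0|) with l r
        constructor <;> [linarith [ht.1, neg_abs_le t0]; linarith [ht.2, le_abs_self t0]]
      have : s * t ≤ s * (|t0| + 1) := by
        apply mul_le_mul_of_nonneg_left _ hs.le
        exact (le_abs_self t).trans h2
      have := neg_abs_le c
      simp only [hB]; linarith
    nlinarith [Nat.cast_nonneg (α := ℝ) k, h1]
  -- summand derivatives
  have hg : ∀ (n : ℕ) (t : ℝ), t ∈ Set.Ioo (t0 - 1) (t0 + 1) →
      HasDerivAt (fun u => x n u * Real.exp ((s * u - c) * n))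
      ((s * M t - lam) * (x n t * Real.exp ((s * t - c) * n))
        + lam * ((if n = 0 then 0 else x (n - 1) t) * Real.exp ((s * t - c) * n))) t := by
    intro n t _
    have h1 : HasDerivAt (fun u : ℝ => s * u) s t := by
      simpa using (hasDerivAt_id t).const_mul s
    have hlin : HasDerivAt (fun u : ℝ => (s * u - c) * n) (s * n) t := by
      simpa using (h1.sub_const c).mul_const (n : ℝ)
    have he := hlin.exp
    have := (hODE n t).mul he
    exact this.congr_deriv (by ring)
  -- the uniform bound
  have hbound : ∀ (n : ℕ) (t : ℝ), t ∈ Set.Ioo (t0 - 1) (t0 + 1) →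
      ‖(s * M t - lam) * (x n t * Real.exp ((s * t - c) * n))
        + lam * ((if n = 0 then 0 else x (n - 1) t) * Real.exp ((s * t - c) * n))‖ ≤
      (s * CM + lam) * (x n T * Real.exp (2 * lam + (2 * s + B) * n))
        + lam * (if n = 0 then 0 else x (n - 1) T * Real.exp (2 * lam + (2 * s + B) * n)) := by
    intro n t ht
    rw [Real.norm_eq_abs]
    have hMabs : |s * M t - lam| ≤ s * CM + lam := by
      have h1 := hMnn t
      have h2 := hMb t ht
      rw [abs_le]
      constructor <;> nlinarith
    have hxE : x n t * Real.exp ((s * t - c) * n) ≤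
        x n T * Real.exp (2 * lam + (2 * s + B) * n) := by
      calc x n t * Real.exp ((s * t - c) * n)
          ≤ (x n T * Real.exp (2 * (s * n + lam))) * Real.exp (B * n) := by
            apply mul_le_mul (hxb n t ht) (hEb n t ht) (Real.exp_pos _).le
            exact mul_nonneg (hnn n T) (Real.exp_pos _).le
        _ = x n T * Real.exp (2 * lam + (2 * s + B) * n) := by
            rw [mul_assoc, ← Real.exp_add]
            congr 2
            ring
    have e1 : |(s * M t - lam) * (x n t * Real.exp ((s * t - c) * n))| ≤
        (s * CM + lam) * (x n T * Real.exp (2 * lam + (2 * s + B) * n)) := by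
      rw [abs_mul]
      apply mul_le_mul hMabs _ (abs_nonneg _) (by positivity)
      rw [abs_of_nonneg (mul_nonneg (hnn n t) (Real.exp_pos _).le)]
      exact hxE
    have e2 : |lam * ((if n = 0 then 0 else x (n - 1) t) * Real.exp ((s * t - c) * n))| ≤
        lam * (if n = 0 then 0 else x (n - 1) T * Real.exp (2 * lam + (2 * s + B) * n)) := by
      rcases n with _ | m
      · simp
      · simp only [Nat.succ_ne_zero, if_false, Nat.add_sub_cancel]
        rw [abs_mul, abs_of_pos hlam, abs_of_nonneg (mul_nonneg (hnn m t) (Real.exp_pos _).le)]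
        apply mul_le_mul_of_nonneg_left _ hlam.le
        calc x m t * Real.exp ((s * t - c) * (m + 1 : ℕ))
            ≤ (x m T * Real.exp (2 * (s * m + lam))) * Real.exp (B * (m + 1 : ℕ)) := by
              apply mul_le_mul (hxb m t ht) (hEb (m + 1) t ht) (Real.exp_pos _).le
              exact mul_nonneg (hnn m T) (Real.exp_pos _).le
          _ ≤ x m T * Real.exp (2 * lam + (2 * s + B) * (m + 1 : ℕ)) := by
              rw [mul_assoc, ← Real.exp_add]
              apply mul_le_mul_of_nonneg_left (Real.exp_le_exp.2 _) (hnn m T)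
              push_cast
              nlinarith [Nat.cast_nonneg (α := ℝ) m]
    calc |(s * M t - lam) * (x n t * Real.exp ((s * t - c) * n))
          + lam * ((if n = 0 then 0 else x (n - 1) t) * Real.exp ((s * t - c) * n))|
        ≤ |(s * M t - lam) * (x n t * Real.exp ((s * t - c) * n))|
          + |lam * ((if n = 0 then 0 else x (n - 1) t) * Real.exp ((s * t - c) * n))| :=
          abs_add_le _ _
      _ ≤ _ := add_le_add e1 e2
  -- summability of the bound
  have husum : Summable (fun n : ℕ => (s * CM + lam) * (x n T * Real.exp (2 * lam + (2 * s + B) * n))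
      + lam * (if n = 0 then 0 else x (n - 1) T * Real.exp (2 * lam + (2 * s + B) * n))) := by
    apply Summable.add
    · apply Summable.mul_left
      apply ((hmom T (2 * s + B)).mul_left (Real.exp (2 * lam))).congr
      intro n
      rw [Real.exp_add (2 * lam) ((2 * s + B) * n)]
      ring
    · apply Summable.mul_left
      rw [← summable_nat_add_iff 1]
      simp only [Nat.succ_ne_zero, if_false, Nat.add_sub_cancel]
      apply ((hmom T (2 * s + B)).mul_left (Real.exp (2 * lam + (2 * s + B)))).congr
      intro n
      rw [show 2 * lam + (2 * s + B) * ((n : ℕ) + 1 : ℕ) =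
        (2 * lam + (2 * s + B)) + (2 * s + B) * n by push_cast; ring,
        Real.exp_add (2 * lam + (2 * s + B)) ((2 * s + B) * n)]
      ring
  -- apply the term-wise differentiation theorem
  have hsum0 : Summable (fun n : ℕ => x n t0 * Real.exp ((s * t0 - c) * n)) := hmom t0 (s * t0 - c)
  have ht0 : t0 ∈ Set.Ioo (t0 - 1) (t0 + 1) := by constructor <;> linarith
  have hD := hasDerivAt_tsum_of_isPreconnected husum isOpen_Ioo
    ((convex_Ioo (t0 - 1) (t0 + 1)).isPreconnected) hg hbound ht0 hsum0 ht0
  -- compute the value of the derivative series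
  have S1 : Summable (fun n : ℕ => (s * M t0 - lam) * (x n t0 * Real.exp ((s * t0 - c) * n))) :=
    hsum0.mul_left _
  have S2 : Summable (fun n : ℕ =>
      lam * ((if n = 0 then 0 else x (n - 1) t0) * Real.exp ((s * t0 - c) * n))) := by
    rw [← summable_nat_add_iff 1]
    simp only [Nat.succ_ne_zero, if_false, Nat.add_sub_cancel]
    apply ((hmom t0 (s * t0 - c)).mul_left (lam * Real.exp (s * t0 - c))).congr
    intro n
    rw [show (s * t0 - c) * ((n : ℕ) + 1 : ℕ) = (s * t0 - c) + (s * t0 - c) * n by push_cast; ring,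
      Real.exp_add (s * t0 - c) ((s * t0 - c) * n)]
    ring
  have hval : (∑' n : ℕ, ((s * M t0 - lam) * (x n t0 * Real.exp ((s * t0 - c) * n))
      + lam * ((if n = 0 then 0 else x (n - 1) t0) * Real.exp ((s * t0 - c) * n)))) =
      (s * M t0 - lam + lam * Real.exp (s * t0 - c)) *
        ∑' k : ℕ, x k t0 * Real.exp ((s * t0 - c) * k) := by
    rw [Summable.tsum_add S1 S2, tsum_mul_left, Summable.tsum_eq_zero_add S2]
    simp only [Nat.succ_ne_zero, if_false, Nat.add_sub_cancel, eq_self_iff_true, if_true,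
      mul_zero, zero_mul, zero_add]
    have : (∑' n : ℕ, lam * (x n t0 * Real.exp ((s * t0 - c) * ((n : ℕ) + 1 : ℕ)))) =
        (lam * Real.exp (s * t0 - c)) * ∑' n : ℕ, x n t0 * Real.exp ((s * t0 - c) * n) := by
      rw [← tsum_mul_left]
      congr 1
      funext n
      rw [show (s * t0 - c) * ((n : ℕ) + 1 : ℕ) = (s * t0 - c) + (s * t0 - c) * n by
        push_cast; ring, Real.exp_add (s * t0 - c) ((s * t0 - c) * n)]
      ring
    rw [this]
    generalize (∑' (n : ℕ), x n t0 * Real.exp ((s * t0 - c) * (n : ℝ))) = A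
    ring
  rw [← hval]
  exact hD

end Core

section Core2
variable {s lam : ℝ} {x : ℕ → ℝ → ℝ} {M : ℝ → ℝ}

/-- Derivative of the generating function in the `c` variable. -/
lemma ratchet_hasDerivAt_H (hnn : ∀ k t, 0 ≤ x k t)
    (hmom : ∀ (t ξ : ℝ), Summable (fun k : ℕ => x k t * Real.exp (ξ * k)))
    (t0 c0 : ℝ) :
    HasDerivAt (fun c => ∑' k : ℕ, x k t0 * Real.exp ((s * t0 - c) * k))
      (∑' k : ℕ, -((k : ℝ) * (x k t0 * Real.exp ((s * t0 - c0) * k)))) c0 := by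
  have hg : ∀ (n : ℕ) (c : ℝ), c ∈ Set.Ioo (c0 - 1) (c0 + 1) →
      HasDerivAt (fun c => x n t0 * Real.exp ((s * t0 - c) * n))
        (-((n : ℝ) * (x n t0 * Real.exp ((s * t0 - c) * n)))) c := by
    intro n c _
    have hlin : HasDerivAt (fun c : ℝ => (s * t0 - c) * n) (-(n : ℝ)) c := by
      simpa using ((hasDerivAt_id c).const_sub (s * t0)).mul_const (n : ℝ)
    have := hlin.exp.const_mul (x n t0)
    exact this.congr_deriv (by ring)
  have hbound : ∀ (n : ℕ) (c : ℝ), c ∈ Set.Ioo (c0 - 1) (c0 + 1) →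
      ‖-((n : ℝ) * (x n t0 * Real.exp ((s * t0 - c) * n)))‖ ≤
        (n : ℝ) * (x n t0 * Real.exp ((s * t0 - c0 + 1) * n)) := by
    intro n c hc
    rw [Real.norm_eq_abs, abs_neg,
      abs_of_nonneg (mul_nonneg (Nat.cast_nonneg n)
        (mul_nonneg (hnn n t0) (Real.exp_pos _).le))]
    have : Real.exp ((s * t0 - c) * n) ≤ Real.exp ((s * t0 - c0 + 1) * n) := by
      apply Real.exp_le_exp.2
      apply mul_le_mul_of_nonneg_right _ (Nat.cast_nonneg n)
      linarith [hc.1]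
    calc (n : ℝ) * (x n t0 * Real.exp ((s * t0 - c) * n))
        ≤ (n : ℝ) * (x n t0 * Real.exp ((s * t0 - c0 + 1) * n)) := by
          apply mul_le_mul_of_nonneg_left _ (Nat.cast_nonneg n)
          exact mul_le_mul_of_nonneg_left this (hnn n t0)
      _ = _ := rfl
  have husum : Summable (fun n : ℕ => (n : ℝ) * (x n t0 * Real.exp ((s * t0 - c0 + 1) * n))) :=
    ratchet_summable_mul hnn hmom t0 _
  have hc0 : c0 ∈ Set.Ioo (c0 - 1) (c0 + 1) := by constructor <;> linarith
  exact hasDerivAt_tsum_of_isPreconnected husum isOpen_Ioo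
    ((convex_Ioo (c0 - 1) (c0 + 1)).isPreconnected) hg hbound hc0 (hmom t0 (s * t0 - c0)) hc0

/-- Positivity of the generating function values. -/
lemma ratchet_A_pos (hnn : ∀ k t, 0 ≤ x k t)
    (hprob : ∀ t, HasSum (fun k : ℕ => x k t) 1)
    (hmom : ∀ (t ξ : ℝ), Summable (fun k : ℕ => x k t * Real.exp (ξ * k)))
    (t c : ℝ) :
    0 < ∑' k : ℕ, x k t * Real.exp ((s * t - c) * k) := by
  obtain ⟨k, hk⟩ : ∃ k, 0 < x k t := by
    by_contra h
    push_neg at h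
    have hz : ∀ k : ℕ, x k t = 0 := fun k => le_antisymm (h k) (hnn k t)
    have := hprob t
    simp only [hz] at this
    exact (one_ne_zero : (1:ℝ) ≠ 0) (this.unique hasSum_zero)
  exact Summable.tsum_pos (hmom t (s * t - c))
    (fun i => mul_nonneg (hnn i t) (Real.exp_pos _).le) k
    (mul_pos hk (Real.exp_pos _))

end Core2

section Main
variable {s lam : ℝ} {x : ℕ → ℝ → ℝ} {M : ℝ → ℝ}

/-- The characteristic identity: the log generating function along characteristics. -/
lemma ratchet_log_identity (hs : 0 < s) (hlam : 0 < lam)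
    (hnn : ∀ k t, 0 ≤ x k t)
    (hprob : ∀ t, HasSum (fun k : ℕ => x k t) 1)
    (hmom : ∀ (t ξ : ℝ), Summable (fun k : ℕ => x k t * Real.exp (ξ * k)))
    (hM : ∀ t, HasSum (fun k : ℕ => (k : ℝ) * x k t) (M t))
    (hODE : ∀ k t, HasDerivAt (fun u => x k u)
      ((s * (M t - k) - lam) * x k t +
        lam * (if k = 0 then 0 else x (k - 1) t)) t)
    (t0 c : ℝ) :
    Real.log (∑' k : ℕ, x k t0 * Real.exp ((s * t0 - c) * k)) =
      Real.log (∑' k : ℕ, x k 0 * Real.exp (-c * k))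
      - Real.log (∑' k : ℕ, x k 0 * Real.exp (-(s * t0) * k))
      + (lam / s) * (Real.exp (s * t0) - 1) * (Real.exp (-c) - Real.exp (-(s * t0))) := by
  set F : ℝ → ℝ := fun t =>
    Real.log (∑' k : ℕ, x k t * Real.exp ((s * t - c) * k))
    - Real.log (∑' k : ℕ, x k t * Real.exp ((s * t - s * t0) * k))
    - (lam / s) * (Real.exp (s * t) - 1) * (Real.exp (-c) - Real.exp (-(s * t0))) with hF
  have hder : ∀ t, HasDerivAt F 0 t := by
    intro t
    have hA1 := ratchet_hasDerivAt_A hs hlam hnn hmom hM hODE c t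
    have hA2 := ratchet_hasDerivAt_A hs hlam hnn hmom hM hODE (s * t0) t
    have hp1 := ratchet_A_pos (s := s) hnn hprob hmom t c
    have hp2 := ratchet_A_pos (s := s) hnn hprob hmom t (s * t0)
    have hl1 := hA1.log (ne_of_gt hp1)
    have hl2 := hA2.log (ne_of_gt hp2)
    have hst : HasDerivAt (fun t : ℝ => s * t) s t := by
      simpa using (hasDerivAt_id t).const_mul s
    have he := hst.exp
    have h3 : HasDerivAt (fun t : ℝ => (lam / s) * (Real.exp (s * t) - 1) *
        (Real.exp (-c) - Real.exp (-(s * t0))))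
        ((lam / s) * (Real.exp (s * t) * s) * (Real.exp (-c) - Real.exp (-(s * t0)))) t := by
      have := ((he.sub_const 1).const_mul (lam / s)).mul_const
        (Real.exp (-c) - Real.exp (-(s * t0)))
      exact this
    have hcomb := (hl1.sub hl2).sub h3
    refine hcomb.congr_deriv ?_
    symm
    rw [mul_div_assoc, div_self (ne_of_gt hp1), mul_one,
      mul_div_assoc, div_self (ne_of_gt hp2), mul_one]
    rw [show s * t - c = s * t + (-c) by ring,
      show s * t - s * t0 = s * t + (-(s * t0)) by ring,
      Real.exp_add, Real.exp_add]
    field_simp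
    ring
  have hdiff : Differentiable ℝ F := fun t => (hder t).differentiableAt
  have hconst : F t0 = F 0 := is_const_of_deriv_eq_zero hdiff (fun t => (hder t).deriv) t0 0
  have hA1 : (∑' k : ℕ, x k t0 * Real.exp ((s * t0 - s * t0) * k)) = 1 := by
    have h : ∀ k : ℕ, x k t0 * Real.exp ((s * t0 - s * t0) * k) = x k t0 := by
      intro k
      rw [sub_self, zero_mul, Real.exp_zero, mul_one]
    rw [tsum_congr h, (hprob t0).tsum_eq]
  have e1 : (∑' k : ℕ, x k 0 * Real.exp ((s * 0 - c) * k))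
      = ∑' k : ℕ, x k 0 * Real.exp (-c * k) :=
    tsum_congr fun k => by rw [show s * 0 - c = -c by ring]
  have e2 : (∑' k : ℕ, x k 0 * Real.exp ((s * 0 - s * t0) * k))
      = ∑' k : ℕ, x k 0 * Real.exp (-(s * t0) * k) :=
    tsum_congr fun k => by rw [show s * 0 - s * t0 = -(s * t0) by ring]
  simp only [hF] at hconst
  rw [hA1, e1, e2] at hconst
  simp only [Real.log_one, mul_zero, Real.exp_zero, sub_zero, sub_self, zero_mul] at hconst
  linarith [hconst]

end Main

/-- Explicit formula for the mean of the infinite-population ratchet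
dynamics in terms of the initial generating function. -/
theorem mean_formula
    (s lam : ℝ) (hs : 0 < s) (hlam : 0 < lam)
    (x : ℕ → ℝ → ℝ) (M : ℝ → ℝ)
    (hnn : ∀ k t, 0 ≤ x k t)
    (hprob : ∀ t, HasSum (fun k => x k t) 1)
    (hx00 : 0 < x 0 0)
    (hmom : ∀ (t ξ : ℝ), Summable (fun k : ℕ => x k t * Real.exp (ξ * k)))
    (hM : ∀ t, HasSum (fun k : ℕ => (k : ℝ) * x k t) (M t))
    (hODE : ∀ k t, HasDerivAt (fun u => x k u)
      ((s * (M t - k) - lam) * x k t +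
        lam * (if k = 0 then 0 else x (k - 1) t)) t) :
    ∀ t : ℝ, M t =
      -(deriv (fun ξ : ℝ => Real.log (∑' k : ℕ, x k 0 * Real.exp (-ξ * k)))
          (s * t))
        + (lam / s) * (1 - Real.exp (-(s * t))) := by
  intro t
  have hfun : (fun ξ : ℝ => Real.log (∑' k : ℕ, x k 0 * Real.exp (-ξ * k))) =
      (fun ξ : ℝ => Real.log (∑' k : ℕ, x k t * Real.exp ((s * t - ξ) * k))
        + Real.log (∑' k : ℕ, x k 0 * Real.exp (-(s * t) * k))
        - lam / s * (Real.exp (s * t) - 1) * (Real.exp (-ξ) - Real.exp (-(s * t)))) := by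
    funext ξ
    have h := ratchet_log_identity hs hlam hnn hprob hmom hM hODE t ξ
    linarith
  rw [hfun]
  -- derivative of the generating function in ξ
  have hH := ratchet_hasDerivAt_H (s := s) hnn hmom t (s * t)
  have hH1 : (∑' k : ℕ, x k t * Real.exp ((s * t - s * t) * k)) = 1 := by
    have h : ∀ k : ℕ, x k t * Real.exp ((s * t - s * t) * k) = x k t := by
      intro k
      rw [sub_self, zero_mul, Real.exp_zero, mul_one]
    rw [tsum_congr h, (hprob t).tsum_eq]
  have hval : (∑' k : ℕ, -((k : ℝ) * (x k t * Real.exp ((s * t - s * t) * k)))) = -(M t) := by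
    have h : ∀ k : ℕ, -((k : ℝ) * (x k t * Real.exp ((s * t - s * t) * k)))
        = -((k : ℝ) * x k t) := by
      intro k
      rw [sub_self, zero_mul, Real.exp_zero, mul_one]
    rw [tsum_congr h, tsum_neg, (hM t).tsum_eq]
  have hlog := hH.log (by rw [hH1]; exact one_ne_zero)
  have hexpc : HasDerivAt (fun ξ : ℝ => Real.exp (-ξ)) (Real.exp (-(s * t)) * -1) (s * t) :=
    (hasDerivAt_neg (s * t)).exp
  have h3 : HasDerivAt (fun ξ : ℝ =>
      lam / s * (Real.exp (s * t) - 1) * (Real.exp (-ξ) - Real.exp (-(s * t))))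
      (lam / s * (Real.exp (s * t) - 1) * (Real.exp (-(s * t)) * -1)) (s * t) :=
    (hexpc.sub_const _).const_mul _
  have hcomb := (hlog.add_const
    (Real.log (∑' k : ℕ, x k 0 * Real.exp (-(s * t) * k)))).sub h3
  erw [hcomb.deriv, hval, hH1, div_one]
  have hee : Real.exp (s * t) * Real.exp (-(s * t)) = 1 := by
    rw [← Real.exp_add]; simp
  have hs' : s ≠ 0 := ne_of_gt hs
  field_simp
  nlinarith [hee, Real.exp_pos (s * t), Real.exp_pos (-(s * t))]
end

section
/- If the initial condition of the system dx_k/dt = (s(M₁(x)-k)-λ)x_k + λx_{k-1} is Poisson(μ), then the solution at time t is Poisson with parameter λ/s + e^{-st}(μ - λ/s). In particular Poisson(λ/s) is a stationary point. -/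
noncomputable def poissonPMF (a : ℝ) (k : ℕ) : ℝ :=
  Real.exp (-a) * a ^ k / (Nat.factorial k)

/-- Constancy of a function with vanishing derivative on an open interval. -/
lemma const_on_Ioo {l u : ℝ} {g : ℝ → ℝ}
    (hg : ∀ t ∈ Set.Ioo l u, HasDerivAt g 0 t)
    {t₀ t₁ : ℝ} (h₀ : t₀ ∈ Set.Ioo l u) (h₁ : t₁ ∈ Set.Ioo l u) :
    g t₁ = g t₀ := by
  wlog hle : t₀ ≤ t₁ generalizing t₀ t₁
  · exact (this h₁ h₀ (le_of_not_ge hle)).symm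
  have hsub : Set.Icc t₀ t₁ ⊆ Set.Ioo l u := fun y hy =>
    ⟨lt_of_lt_of_le h₀.1 hy.1, lt_of_le_of_lt hy.2 h₁.2⟩
  have hcont : ContinuousOn g (Set.Icc t₀ t₁) := fun y hy =>
    ((hg y (hsub hy)).continuousAt).continuousWithinAt
  have hderiv : ∀ y ∈ Set.Ico t₀ t₁, HasDerivWithinAt g 0 (Set.Ici y) y := fun y hy =>
    ((hg y (hsub ⟨hy.1, hy.2.le⟩)).hasDerivWithinAt)
  exact constant_of_has_deriv_right_zero hcont hderiv t₁ ⟨hle, le_rfl⟩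

/-- Poisson initial conditions stay Poisson under the ratchet dynamical
system, with parameter λ/s + e^{-st}(μ - λ/s); in particular Poisson(λ/s)
is a stationary point. -/
theorem poisson_to_poisson
    (s lam : ℝ) (hs : 0 < s) (hlam : 0 < lam)
    (x : ℕ → ℝ → ℝ) (M : ℝ → ℝ)
    (hnn : ∀ k t, 0 ≤ x k t)
    (hprob : ∀ t, HasSum (fun k => x k t) 1)
    (hx00 : 0 < x 0 0)
    (hmom : ∀ (t ξ : ℝ), Summable (fun k : ℕ => x k t * Real.exp (ξ * k)))
    (hM : ∀ t, HasSum (fun k : ℕ => (k : ℝ) * x k t) (M t))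
    (hODE : ∀ k t, HasDerivAt (fun u => x k u)
      ((s * (M t - k) - lam) * x k t +
        lam * (if k = 0 then 0 else x (k - 1) t)) t)
    (μ : ℝ) (hμ : 0 < μ)
    (hinit : ∀ k, x k 0 = poissonPMF μ k) :
    (∀ k t, x k t = poissonPMF (lam / s + Real.exp (-(s * t)) * (μ - lam / s)) k) ∧
    (μ = lam / s → ∀ k t, x k t = poissonPMF (lam / s) k) := by
  set a : ℝ → ℝ := fun t => lam / s + Real.exp (-(s * t)) * (μ - lam / s) with ha_def
  have hs0 : s ≠ 0 := hs.ne'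
  -- derivative of a
  have ha : ∀ t, HasDerivAt a (lam - s * a t) t := by
    intro t
    have h1 : HasDerivAt (fun t : ℝ => -(s * t)) (-s) t := by
      simpa using (hasDerivAt_id t).const_mul (-s)
    have h2 := (h1.exp).mul_const (μ - lam / s)
    have h3 := h2.const_add (lam / s)
    refine h3.congr_deriv ?_
    simp only [ha_def]
    field_simp
    ring
  set q : ℕ → ℝ → ℝ := fun k t => a t ^ k / (Nat.factorial k) with hq_def
  have hq : ∀ k t, HasDerivAt (q k)
      (-(s * k) * q k t + lam * (if k = 0 then 0 else q (k - 1) t)) t := by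
    intro k t
    cases k with
    | zero => simpa [hq_def] using (hasDerivAt_const t (1 : ℝ))
    | succ n =>
      have h1 := ((ha t).pow (n + 1)).div_const (Nat.factorial (n + 1) : ℝ)
      refine h1.congr_deriv ?_
      simp only [hq_def, if_neg (Nat.succ_ne_zero n), Nat.succ_sub_one]
      have hfac : (Nat.factorial (n + 1) : ℝ) = (n + 1) * Nat.factorial n := by
        push_cast [Nat.factorial_succ]; ring
      have hfn : (Nat.factorial n : ℝ) ≠ 0 := Nat.cast_ne_zero.mpr (Nat.factorial_ne_zero n)
      have hfn1 : (Nat.factorial (n + 1) : ℝ) ≠ 0 := Nat.cast_ne_zero.mpr (Nat.factorial_ne_zero _)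
      rw [hfac]
      field_simp [hfac]
      push_cast
      ring
  have hpoisson_eq : ∀ t k, poissonPMF (a t) k = Real.exp (-(a t)) * q k t := by
    intro t k
    simp only [poissonPMF, hq_def, mul_div_assoc]
  -- continuity of x k
  have hxcont : ∀ k, Continuous (x k) := by
    intro k
    rw [continuous_iff_continuousAt]
    exact fun t => (hODE k t).continuousAt
  have hacont : Continuous a := by
    apply Continuous.add continuous_const
    exact (Real.continuous_exp.comp ((continuous_const.mul continuous_id).neg)).mul continuous_const
  -- exp series
  have hexp_sum : ∀ t, HasSum (fun k => q k t) (Real.exp (a t)) := by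
    intro t
    have := NormedSpace.expSeries_div_hasSum_exp (a t)
    rw [← Real.exp_eq_exp_ℝ] at this
    exact this
  -- Key local lemma
  have key : ∀ l u t₀, t₀ ∈ Set.Ioo l u → (∀ t ∈ Set.Ioo l u, 0 < x 0 t) →
      (∀ k, x k t₀ = poissonPMF (a t₀) k) →
      ∀ t ∈ Set.Ioo l u, ∀ k, x k t = poissonPMF (a t) k := by
    intro l u t₀ ht₀ hpos h0
    -- ratios
    have hratio : ∀ k, ∀ t ∈ Set.Ioo l u, x k t / x 0 t = q k t := by
      intro k
      induction k with
      | zero =>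
        intro t ht
        simp [hq_def, div_self (hpos t ht).ne']
      | succ n ih =>
        set e : ℝ → ℝ := fun t => x (n + 1) t / x 0 t - q (n + 1) t with he_def
        have he' : ∀ t ∈ Set.Ioo l u, HasDerivAt e (-(s * (n + 1)) * e t) t := by
          intro t ht
          have hx0ne : x 0 t ≠ 0 := (hpos t ht).ne'
          have hd := ((hODE (n + 1) t).div (hODE 0 t) hx0ne).sub (hq (n + 1) t)
          refine hd.congr_deriv ?_
          simp only [he_def, if_neg (Nat.succ_ne_zero n), Nat.succ_sub_one,
            if_pos rfl, hq_def]
          have hihn : x n t / x 0 t = q n t := ih t ht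
          have hxn : x n t = q n t * x 0 t := by
            rw [← hihn]; field_simp
          rw [hxn]
          simp only [hq_def]
          rw [Nat.factorial_succ]
          push_cast
          field_simp
          ring
        set g : ℝ → ℝ := fun t => e t * Real.exp (s * (n + 1) * t) with hg_def
        have hg' : ∀ t ∈ Set.Ioo l u, HasDerivAt g 0 t := by
          intro t ht
          have h1 : HasDerivAt (fun t : ℝ => Real.exp (s * (n + 1) * t))
              (s * (n + 1) * Real.exp (s * (n + 1) * t)) t := by
            have := (((hasDerivAt_id t).const_mul (s * (n + 1))).exp)
            simpa [mul_comm] using this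
          have h2 := (he' t ht).mul h1
          refine h2.congr_deriv ?_
          ring
        have hg0 : g t₀ = 0 := by
          have : e t₀ = 0 := by
            simp only [he_def]
            rw [h0 (n + 1), h0 0, hpoisson_eq, hpoisson_eq]
            have hq0 : q 0 t₀ = 1 := by simp [hq_def]
            rw [hq0]
            have : Real.exp (-(a t₀)) ≠ 0 := Real.exp_ne_zero _
            field_simp
            ring
          simp [hg_def, this]
        intro t ht
        have hgt : g t = 0 := (const_on_Ioo hg' ht₀ ht).trans hg0
        have : e t = 0 := by
          have hexpne : Real.exp (s * (n + 1) * t) ≠ 0 := Real.exp_ne_zero _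
          simpa [hg_def, hexpne] using hgt
        simpa [he_def, sub_eq_zero] using this
    -- identify x 0
    intro t ht k
    have hx0t : ∀ j, x j t = q j t * x 0 t := by
      intro j
      have := hratio j t ht
      field_simp [(hpos t ht).ne'] at this
      linarith [this]
    have hsum1 : HasSum (fun j => q j t * x 0 t) 1 := by
      have := hprob t
      simpa [← hx0t] using this
    have hsum2 : HasSum (fun j => q j t * x 0 t) (Real.exp (a t) * x 0 t) :=
      (hexp_sum t).mul_right _
    have hx0val : x 0 t = Real.exp (-(a t)) := by
      have h1 : Real.exp (a t) * x 0 t = 1 := hsum2.unique hsum1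
      rw [Real.exp_neg]
      field_simp at h1 ⊢
      linarith [h1]
    rw [hx0t k, hx0val, hpoisson_eq, mul_comm]
  -- the clopen set
  set S : Set ℝ := {t | ∀ k, x k t = poissonPMF (a t) k} with hS_def
  have hSclosed : IsClosed S := by
    have : S = ⋂ k, {t | x k t - poissonPMF (a t) k = 0} := by
      ext t; simp [hS_def, sub_eq_zero]
    rw [this]
    refine isClosed_iInter fun k => ?_
    have hc : Continuous fun t => x k t - poissonPMF (a t) k := by
      apply (hxcont k).sub
      simp only [poissonPMF]
      exact ((Real.continuous_exp.comp hacont.neg).mul (hacont.pow k)).div_const _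
    exact isClosed_eq hc continuous_const
  have hSopen : IsOpen S := by
    rw [isOpen_iff_mem_nhds]
    intro t₀ ht₀
    have hx0pos : 0 < x 0 t₀ := by
      rw [ht₀ 0]
      simp only [poissonPMF, pow_zero, Nat.factorial_zero, Nat.cast_one, mul_one]
      positivity
    have hopen : IsOpen {t | 0 < x 0 t} := isOpen_lt continuous_const (hxcont 0)
    have hmem : {t | 0 < x 0 t} ∈ nhds t₀ := hopen.mem_nhds hx0pos
    obtain ⟨l, u, hlu, hsub⟩ := mem_nhds_iff_exists_Ioo_subset.mp hmem
    have : Set.Ioo l u ⊆ S := by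
      intro t ht k
      exact key l u t₀ hlu (fun t' ht' => hsub ht') ht₀ t ht k
    exact Filter.mem_of_superset (Ioo_mem_nhds hlu.1 hlu.2) this
  have h0S : (0 : ℝ) ∈ S := by
    intro k
    have ha0 : a 0 = μ := by simp [ha_def]
    rw [ha0]
    exact hinit k
  have hSuniv : S = Set.univ := IsClopen.eq_univ ⟨hSclosed, hSopen⟩ ⟨0, h0S⟩
  have hmain : ∀ k t, x k t = poissonPMF (a t) k := by
    intro k t
    have : t ∈ S := hSuniv ▸ Set.mem_univ t
    exact this k
  constructor
  · exact fun k t => hmain k t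
  · intro hμeq k t
    have : a t = lam / s := by simp [ha_def, hμeq]
    rw [← this]
    exact hmain k t
end

section
/- For any probability vector x(0) on ℕ with x_0(0) > 0 and exponential moments of all orders, the solution x(t) of dx_k/dt = (s(M₁(x)-k)-λ)x_k + λx_{k-1}, given by the explicit cumulant solution, converges pointwise as t → ∞ to the Poisson(λ/s) distribution. -/
open Filter Finset Real

/-- explicit solution building block: `W_k(t) = ∑_{i≤k} c_{k-i} τ(t)^i / i!`
with `τ(t) = θ(e^{st}-1)`. -/
noncomputable def ratchetW (s θ : ℝ) (c : ℕ → ℝ) (k : ℕ) (t : ℝ) : ℝ :=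
  ∑ i ∈ Finset.range (k+1), c (k-i) * (θ * (Real.exp (s*t) - 1)) ^ i / (Nat.factorial i)

lemma ratchetW_zero (s θ : ℝ) (c : ℕ → ℝ) (t : ℝ) : ratchetW s θ c 0 t = c 0 := by
  simp [ratchetW]

lemma ratchetW_at_zero (s θ : ℝ) (c : ℕ → ℝ) (k : ℕ) : ratchetW s θ c k 0 = c k := by
  rw [ratchetW, Finset.sum_eq_single 0]
  · simp
  · intro i hi hne
    simp [mul_zero, zero_pow hne]
  · simp

lemma ratchetτ_hasDerivAt (s θ : ℝ) (t : ℝ) :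
    HasDerivAt (fun u => θ * (Real.exp (s*u) - 1)) (θ * s * Real.exp (s*t)) t := by
  have h1 : HasDerivAt (fun u => Real.exp (s*u)) (Real.exp (s*t) * (s * 1)) t :=
    ((hasDerivAt_id t).const_mul s).exp
  have h2 := (h1.sub_const 1).const_mul θ
  exact h2.congr_deriv (by ring)

lemma ratchetW_hasDerivAt (s θ : ℝ) (c : ℕ → ℝ) (k : ℕ) (t : ℝ) :
    HasDerivAt (ratchetW s θ c (k+1)) (θ * s * Real.exp (s*t) * ratchetW s θ c k t) t := by
  have h : HasDerivAt (ratchetW s θ c (k+1))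
      (∑ i ∈ Finset.range (k+2),
        c (k+1-i) * ((i : ℝ) * (θ * (Real.exp (s*t) - 1)) ^ (i-1) * (θ * s * Real.exp (s*t)))
          / (Nat.factorial i)) t := by
    apply HasDerivAt.fun_sum
    intro i _
    exact (((ratchetτ_hasDerivAt s θ t).pow i).const_mul (c (k+1-i))).div_const _
  convert h using 1
  rw [Finset.sum_range_succ']
  simp only [Nat.cast_zero, zero_mul, mul_zero, Nat.factorial_zero, Nat.cast_one, zero_div,
    add_zero]
  rw [ratchetW, Finset.mul_sum]
  refine Finset.sum_congr rfl fun i _ => ?_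
  simp only [Nat.succ_sub_succ, Nat.add_sub_cancel, Nat.factorial_succ, Nat.sub_zero]
  have hfac : ((Nat.factorial i : ℝ)) ≠ 0 := Nat.cast_ne_zero.mpr (Nat.factorial_ne_zero i)
  push_cast
  field_simp

/-- `e^{-skt} W_k(t)` rewritten with only decaying factors. -/
lemma ratchetN_eq (s θ : ℝ) (c : ℕ → ℝ) (k : ℕ) (t : ℝ) :
    Real.exp (-(s*k*t)) * ratchetW s θ c k t
      = ∑ i ∈ Finset.range (k+1),
          c (k-i) * Real.exp (-(s*((k:ℝ)-i)*t)) * (θ * (1 - Real.exp (-(s*t)))) ^ i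
            / (Nat.factorial i) := by
  rw [ratchetW, Finset.mul_sum]
  refine Finset.sum_congr rfl fun i hi => ?_
  have hik : (i:ℝ) ≤ (k:ℝ) := by
    exact_mod_cast Nat.lt_succ_iff.mp (Finset.mem_range.mp hi)
  have hsplit : Real.exp (-(s*k*t))
      = Real.exp (-(s*((k:ℝ)-i)*t)) * Real.exp (-(s*i*t)) := by
    rw [← Real.exp_add]; ring_nf
  have hpow : Real.exp (-(s*i*t)) * (θ * (Real.exp (s*t) - 1)) ^ i
      = (θ * (1 - Real.exp (-(s*t)))) ^ i := by
    have h1 : Real.exp (-(s*i*t)) = (Real.exp (-(s*t))) ^ i := by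
      rw [← Real.exp_nat_mul]; ring_nf
    rw [h1, ← mul_pow]
    congr 1
    have h2 : Real.exp (-(s*t)) * Real.exp (s*t) = 1 := by
      rw [← Real.exp_add]; simp
    linear_combination θ * h2
  rw [hsplit]
  linear_combination (c (k-i) * Real.exp (-(s*((k:ℝ)-(i:ℝ))*t)) / (Nat.factorial i : ℝ)) * hpow

lemma ratchetN_le {s θ : ℝ} {c : ℕ → ℝ} (hs : 0 < s) (hθ : 0 ≤ θ)
    (hc : ∀ m, 0 ≤ c m) {t : ℝ} (ht : 0 ≤ t) (k : ℕ) :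
    |Real.exp (-(s*k*t)) * ratchetW s θ c k t|
      ≤ ∑ i ∈ Finset.range (k+1), c i * (θ^(k-i) / (Nat.factorial (k-i))) := by
  have he1 : ∀ a : ℝ, 0 ≤ a → Real.exp (-(s*a*t)) ≤ 1 := by
    intro a ha
    rw [Real.exp_le_one_iff]
    have : 0 ≤ s * a * t := by positivity
    linarith
  have h1t : Real.exp (-(s*t)) ≤ 1 := by
    rw [Real.exp_le_one_iff]
    have : 0 ≤ s * t := by positivity
    linarith
  have hθ'0 : 0 ≤ θ * (1 - Real.exp (-(s*t))) := mul_nonneg hθ (by linarith)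
  have hθ'1 : θ * (1 - Real.exp (-(s*t))) ≤ θ := by
    have := Real.exp_pos (-(s*t))
    nlinarith
  rw [ratchetN_eq]
  have hnn : ∀ i ∈ Finset.range (k+1),
      0 ≤ c (k-i) * Real.exp (-(s*((k:ℝ)-i)*t)) * (θ * (1 - Real.exp (-(s*t)))) ^ i
            / (Nat.factorial i) := by
    intro i _
    have := hc (k-i)
    have := Real.exp_pos (-(s*((k:ℝ)-i)*t))
    positivity
  rw [abs_of_nonneg (Finset.sum_nonneg hnn)]
  calc ∑ i ∈ Finset.range (k+1),
        c (k-i) * Real.exp (-(s*((k:ℝ)-i)*t)) * (θ * (1 - Real.exp (-(s*t)))) ^ i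
          / (Nat.factorial i)
      ≤ ∑ i ∈ Finset.range (k+1), c (k-i) * (θ^i / (Nat.factorial i)) := by
        apply Finset.sum_le_sum
        intro i hi
        have hik : (i:ℝ) ≤ (k:ℝ) := by
          exact_mod_cast Nat.lt_succ_iff.mp (Finset.mem_range.mp hi)
        have h1 : Real.exp (-(s*((k:ℝ)-i)*t)) ≤ 1 := he1 _ (by linarith)
        have h2 : (θ * (1 - Real.exp (-(s*t)))) ^ i ≤ θ ^ i :=
          pow_le_pow_left₀ hθ'0 hθ'1 i
        have hck := hc (k-i)
        have hrw : c (k-i) * (θ^i / (Nat.factorial i))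
             = c (k-i) * 1 * θ^i / (Nat.factorial i) := by ring
        rw [hrw]
        gcongr
    _ = ∑ i ∈ Finset.range (k+1), c i * (θ^(k-i) / (Nat.factorial (k-i))) := by
        rw [← Finset.sum_range_reflect (fun j => c j * (θ^(k-j) / (Nat.factorial (k-j)))) (k+1)]
        refine Finset.sum_congr rfl fun j hj => ?_
        have hjk : j ≤ k := Nat.lt_succ_iff.mp (Finset.mem_range.mp hj)
        simp only [Nat.add_sub_cancel]
        rw [Nat.sub_sub_self hjk]

lemma ratchet_exp_tendsto {s : ℝ} (hs : 0 < s) {a : ℝ} (ha : 0 < a) :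
    Tendsto (fun t => Real.exp (-(s*a*t))) atTop (nhds 0) := by
  have h1 : Tendsto (fun t : ℝ => -(s*a*t)) atTop atBot := by
    have h2 : Tendsto (fun t : ℝ => (s*a)*t) atTop atTop :=
      Tendsto.const_mul_atTop (by positivity) tendsto_id
    simpa [mul_assoc] using tendsto_neg_atBot_iff.mpr h2
  exact Real.tendsto_exp_atBot.comp h1

lemma ratchetN_tendsto {s θ : ℝ} (hs : 0 < s) (c : ℕ → ℝ) (k : ℕ) :
    Tendsto (fun t => Real.exp (-(s*k*t)) * ratchetW s θ c k t) atTop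
      (nhds (c 0 * (θ^k / (Nat.factorial k)))) := by
  have hbase : Tendsto (fun t => Real.exp (-(s*t))) atTop (nhds 0) := by
    simpa using ratchet_exp_tendsto hs one_pos
  have hθ' : Tendsto (fun t => (θ * (1 - Real.exp (-(s*t))))) atTop (nhds θ) := by
    have := (tendsto_const_nhds (x := (1:ℝ)) (f := atTop)).sub hbase
    have h2 := (tendsto_const_nhds (x := θ) (f := atTop)).mul this
    simpa using h2
  have hterm : ∀ i ∈ Finset.range (k+1),
      Tendsto (fun t => c (k-i) * Real.exp (-(s*((k:ℝ)-i)*t)) * (θ * (1 - Real.exp (-(s*t)))) ^ i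
        / (Nat.factorial i)) atTop
        (nhds (if i = k then c 0 * (θ^k / (Nat.factorial k)) else 0)) := by
    intro i hi
    have hik : i ≤ k := Nat.lt_succ_iff.mp (Finset.mem_range.mp hi)
    rcases eq_or_lt_of_le hik with heq | hlt
    · subst heq
      simp only [Nat.sub_self, sub_self, zero_mul, mul_zero, neg_zero, Real.exp_zero, mul_one,
        eq_self_iff_true, if_true]
      simpa [mul_div_assoc] using
        (((tendsto_const_nhds (x := c 0) (f := atTop)).mul (hθ'.pow i)).div_const
          ((Nat.factorial i : ℝ)))
    · have hpos : (0:ℝ) < (k:ℝ) - i := by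
        have : (i:ℝ) < (k:ℝ) := by exact_mod_cast hlt
        linarith
      have h0 := ratchet_exp_tendsto hs hpos
      have := (((tendsto_const_nhds (x := c (k-i)) (f := atTop)).mul h0).mul (hθ'.pow i)).div_const
        ((Nat.factorial i : ℝ))
      simp only [if_neg (Nat.ne_of_lt hlt)]
      simpa using this
  have hsum := tendsto_finset_sum (Finset.range (k+1)) hterm
  have hval : ∑ i ∈ Finset.range (k+1),
      (if i = k then c 0 * (θ^k / (Nat.factorial k)) else 0) = c 0 * (θ^k / (Nat.factorial k)) := by
    rw [Finset.sum_ite_eq' (Finset.range (k+1)) k]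
    simp
  rw [hval] at hsum
  apply hsum.congr
  intro t
  rw [← ratchetN_eq]


/-- For any initial probability vector with positive best class and
exponential moments of all orders, the solution of the ratchet dynamical
system converges pointwise to the Poisson(λ/s) distribution. -/

theorem convergence_to_poisson_equilibrium
    (s lam : ℝ) (hs : 0 < s) (hlam : 0 < lam)
    (x : ℕ → ℝ → ℝ) (M : ℝ → ℝ)
    (hnn : ∀ k t, 0 ≤ x k t)
    (hprob : ∀ t, HasSum (fun k => x k t) 1)
    (hx00 : 0 < x 0 0)
    (hmom : ∀ (t ξ : ℝ), Summable (fun k : ℕ => x k t * Real.exp (ξ * k)))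
    (hM : ∀ t, HasSum (fun k : ℕ => (k : ℝ) * x k t) (M t))
    (hODE : ∀ k t, HasDerivAt (fun u => x k u)
      ((s * (M t - k) - lam) * x k t +
        lam * (if k = 0 then 0 else x (k - 1) t)) t) :
    ∀ k : ℕ, Filter.Tendsto (fun t => x k t) Filter.atTop
      (nhds (poissonPMF (lam / s) k)) := by
  have hsne : s ≠ 0 := ne_of_gt hs
  set θ : ℝ := lam / s with hθdef
  have hθpos : 0 < θ := div_pos hlam hs
  have hθs : θ * s = lam := by rw [hθdef]; field_simp
  set c : ℕ → ℝ := fun m => x m 0 / x 0 0 with hcdef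
  have hc0 : c 0 = 1 := div_self (ne_of_gt hx00)
  have hcnn : ∀ m, 0 ≤ c m := fun m => div_nonneg (hnn m 0) hx00.le
  have hMnn : ∀ t, 0 ≤ M t := fun t =>
    hasSum_le (fun k => mul_nonneg (Nat.cast_nonneg k) (hnn k t)) hasSum_zero (hM t)
  -- positivity of the best class
  have hx0pos : ∀ t : ℝ, 0 ≤ t → 0 < x 0 t := by
    have hf : ∀ u : ℝ, HasDerivAt (fun v => x 0 v * Real.exp (lam*v))
        (s * M u * (x 0 u * Real.exp (lam*u))) u := by
      intro u
      have h1 := hODE 0 u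
      norm_num at h1
      have h2 : HasDerivAt (fun v => Real.exp (lam*v)) (Real.exp (lam*u) * (lam*1)) u :=
        ((hasDerivAt_id u).const_mul lam).exp
      have h3 := h1.mul h2
      exact h3.congr_deriv (by ring)
    intro t ht
    have hmono : Monotone (fun v => x 0 v * Real.exp (lam*v)) := by
      apply monotone_of_deriv_nonneg
      · exact fun u => (hf u).differentiableAt
      · intro u
        rw [(hf u).deriv]
        have h1 := hMnn u
        have h2 := hnn 0 u
        positivity
    have h := hmono ht
    simp only [mul_zero, Real.exp_zero, mul_one] at h
    nlinarith [Real.exp_pos (lam*t), hx00]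
  -- derivative of the ratio times exponential
  have hw' : ∀ (k : ℕ) (u : ℝ), x 0 u ≠ 0 →
      HasDerivAt (fun v => x (k+1) v / x 0 v * Real.exp (s*((k:ℝ)+1)*v))
        (lam * Real.exp (s*u) * (x k u / x 0 u * Real.exp (s*(k:ℝ)*u))) u := by
    intro k u hne
    have h1 := hODE (k+1) u
    simp only [Nat.succ_ne_zero, if_false, Nat.add_sub_cancel] at h1
    have h0 := hODE 0 u
    norm_num at h0
    have hq := h1.div h0 hne
    have hE : HasDerivAt (fun v => Real.exp (s*((k:ℝ)+1)*v))
        (Real.exp (s*((k:ℝ)+1)*u) * (s*((k:ℝ)+1)*1)) u :=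
      ((hasDerivAt_id u).const_mul (s*((k:ℝ)+1))).exp
    have h := hq.mul hE
    have hcast : (fun v => x (k+1) v / x 0 v * Real.exp (s*((k+1:ℕ):ℝ)*v))
        = (fun v => x (k+1) v / x 0 v * Real.exp (s*((k:ℝ)+1)*v)) := by
      push_cast; rfl
    refine h.congr_deriv ?_
    have hexp : Real.exp (s*((k:ℝ)+1)*u) = Real.exp (s*u) * Real.exp (s*(k:ℝ)*u) := by
      rw [← Real.exp_add]; ring_nf
    have hx0sq : x 0 u ^ 2 ≠ 0 := pow_ne_zero 2 hne
    push_cast [Pi.div_apply]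
    field_simp
    rw [hexp]
    ring
  -- the explicit solution
  have main : ∀ (k : ℕ) (t : ℝ), 0 ≤ t →
      x k t / x 0 t * Real.exp (s*(k:ℝ)*t) = ratchetW s θ c k t := by
    intro k
    induction k with
    | zero =>
      intro t ht
      rw [ratchetW_zero, hc0]
      simp [div_self (ne_of_gt (hx0pos t ht))]
    | succ k ih =>
      intro t ht
      have hgd : ∀ u : ℝ, 0 ≤ u → HasDerivAt
          (fun v => x (k+1) v / x 0 v * Real.exp (s*((k:ℝ)+1)*v) - ratchetW s θ c (k+1) v)
          0 u := by
        intro u hu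
        have h1 := hw' k u (ne_of_gt (hx0pos u hu))
        have h2 := ratchetW_hasDerivAt s θ c k u
        have h3 := h1.sub h2
        have hz : lam * Real.exp (s*u) * (x k u / x 0 u * Real.exp (s*(k:ℝ)*u))
            - θ * s * Real.exp (s*u) * ratchetW s θ c k u = 0 := by
          rw [ih u hu, hθs]; ring
        rwa [hz] at h3
      have hcont : ContinuousOn
          (fun v => x (k+1) v / x 0 v * Real.exp (s*((k:ℝ)+1)*v) - ratchetW s θ c (k+1) v)
          (Set.Icc 0 t) :=
        fun u hu => ((hgd u hu.1).continuousAt).continuousWithinAt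
      have hderiv : ∀ u ∈ Set.Ico (0:ℝ) t, HasDerivWithinAt
          (fun v => x (k+1) v / x 0 v * Real.exp (s*((k:ℝ)+1)*v) - ratchetW s θ c (k+1) v)
          0 (Set.Ici u) u :=
        fun u hu => (hgd u hu.1).hasDerivWithinAt
      have hconst := constant_of_has_deriv_right_zero hcont hderiv t (Set.right_mem_Icc.mpr ht)
      have hg0 : x (k+1) 0 / x 0 0 * Real.exp (s*((k:ℝ)+1)*0) - ratchetW s θ c (k+1) 0 = 0 := by
        rw [ratchetW_at_zero]
        simp [hcdef]
      rw [hg0] at hconst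
      have : x (k+1) t / x 0 t * Real.exp (s*((k:ℝ)+1)*t) = ratchetW s θ c (k+1) t := by
        linarith [hconst]
      push_cast
      exact this
  -- x in terms of the explicit solution
  have hxk : ∀ (k : ℕ) (t : ℝ), 0 ≤ t →
      x k t = Real.exp (-(s*(k:ℝ)*t)) * ratchetW s θ c k t * x 0 t := by
    intro k t ht
    have h := main k t ht
    have hne := ne_of_gt (hx0pos t ht)
    have hEne := Real.exp_ne_zero (s*(k:ℝ)*t)
    rw [Real.exp_neg]
    field_simp at h ⊢
    linarith [h]
  -- summable bound
  have hboundsum : Summable (fun n => ∑ i ∈ Finset.range (n+1),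
      c i * (θ^(n-i) / (Nat.factorial (n-i) : ℝ))) := by
    have hc_sum : Summable c := ((hprob 0).summable).div_const (x 0 0)
    have hcn : Summable (fun m => ‖c m‖) := by
      simpa [Real.norm_eq_abs] using hc_sum.abs
    have hgn : Summable (fun j => ‖θ^j / (Nat.factorial j : ℝ)‖) := by
      simp only [Real.norm_eq_abs, abs_div, abs_pow, Nat.abs_cast]
      exact Real.summable_pow_div_factorial |θ|
    exact (summable_norm_sum_mul_range_of_summable_norm hcn hgn).of_norm
  -- convergence of the normalizing sum
  have hT : Tendsto (fun t => ∑' k : ℕ, Real.exp (-(s*(k:ℝ)*t)) * ratchetW s θ c k t) atTop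
      (nhds (Real.exp θ)) := by
    have h := tendsto_tsum_of_dominated_convergence (𝓕 := atTop)
      (f := fun t (k : ℕ) => Real.exp (-(s*(k:ℝ)*t)) * ratchetW s θ c k t)
      (g := fun k : ℕ => c 0 * (θ^k / (Nat.factorial k : ℝ)))
      hboundsum (fun k => ratchetN_tendsto hs c k) ?_
    · have hval : ∑' k : ℕ, c 0 * (θ^k / (Nat.factorial k : ℝ)) = Real.exp θ := by
        rw [Real.exp_eq_exp_ℝ, NormedSpace.exp_eq_tsum_div]
        simp [hc0]
      rwa [hval] at h
    · filter_upwards [eventually_ge_atTop (0:ℝ)] with t ht k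
      simpa only [Real.norm_eq_abs] using ratchetN_le hs hθpos.le hcnn ht k
  -- identification of the sum with 1 / x 0 t
  have hx0eq : ∀ t : ℝ, 0 ≤ t →
      (∑' k : ℕ, Real.exp (-(s*(k:ℝ)*t)) * ratchetW s θ c k t) = (x 0 t)⁻¹ := by
    intro t ht
    have hne := ne_of_gt (hx0pos t ht)
    have h1 := hprob t
    rw [show (fun k => x k t) = fun k : ℕ =>
      (Real.exp (-(s*(k:ℝ)*t)) * ratchetW s θ c k t) * x 0 t from
        funext fun k => hxk k t ht] at h1
    have h2 := h1.div_const (x 0 t)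
    have h3 : HasSum (fun k : ℕ => Real.exp (-(s*(k:ℝ)*t)) * ratchetW s θ c k t)
        (1 / x 0 t) := by
      have heq : (fun k : ℕ => (Real.exp (-(s*(k:ℝ)*t)) * ratchetW s θ c k t) * x 0 t / x 0 t)
          = fun k : ℕ => Real.exp (-(s*(k:ℝ)*t)) * ratchetW s θ c k t := by
        funext k; field_simp
      rwa [heq] at h2
    rw [h3.tsum_eq, one_div]
  -- conclude
  have hx0lim : Tendsto (fun t => x 0 t) atTop (nhds (Real.exp θ)⁻¹) := by
    have h1 := (hT.inv₀ (Real.exp_ne_zero θ))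
    apply h1.congr'
    filter_upwards [eventually_ge_atTop (0:ℝ)] with t ht
    rw [hx0eq t ht, inv_inv]
  intro k
  have hNk := ratchetN_tendsto hs c k (θ := θ)
  have hfin := hNk.mul hx0lim
  have hval : c 0 * (θ^k / (Nat.factorial k : ℝ)) * (Real.exp θ)⁻¹ = poissonPMF (lam/s) k := by
    rw [hc0, poissonPMF, Real.exp_neg, ← hθdef]
    ring
  rw [hval] at hfin
  apply hfin.congr'
  filter_upwards [eventually_ge_atTop (0:ℝ)] with t ht
  exact (hxk k t ht).symm
end

section
/- Under the same setup (solution y(t) started from Π(y_0), η = θ^{1-A}), the mean at time Aτ satisfies M₁(y(Aτ)) = θ + (η/(e^η - 1))·(1 - y_0(Aτ)/π_0). That is, the relaxed Poisson profile approximation yields an affine relationship between the mean fitness M₁ and the current best-class frequency. -/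
lemma hasSum_exp_div (r : ℝ) :
    HasSum (fun n : ℕ => r ^ n / (Nat.factorial n)) (Real.exp r) := by
  rw [Real.exp_eq_exp_ℝ]
  exact NormedSpace.expSeries_div_hasSum_exp r

lemma hasSum_mul_exp_div (r : ℝ) :
    HasSum (fun n : ℕ => (n : ℝ) * r ^ n / (Nat.factorial n)) (r * Real.exp r) := by
  have h : HasSum (fun n : ℕ => ((((n : ℕ)+1 : ℕ)) : ℝ) * r ^ (n+1) / (Nat.factorial (n+1)))
      (r * Real.exp r) := by
    apply ((hasSum_exp_div r).mul_left r).congr_fun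
    intro n
    have h1 : ((Nat.factorial n : ℝ)) ≠ 0 := Nat.cast_ne_zero.mpr (Nat.factorial_ne_zero n)
    have h2 : ((n : ℝ) + 1) ≠ 0 := by positivity
    rw [Nat.factorial_succ]
    push_cast
    field_simp
    ring
  refine (hasSum_nat_add_iff' (f := fun n : ℕ => (n : ℝ) * r ^ n / (Nat.factorial n)) 1).mp ?_
  simpa using h

noncomputable def Rfun (s θ a b y0 : ℝ) (k : ℕ) (t : ℝ) : ℝ :=
  (b * (θ * (1 - Real.exp (-(s * t)))) ^ k + a * θ ^ k) / (y0 * Nat.factorial k)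

lemma Rfun_hasSum (s θ a b y0 : ℝ) (hy0 : y0 ≠ 0) (t : ℝ) :
    HasSum (fun k => Rfun s θ a b y0 k t)
      ((b * Real.exp (θ * (1 - Real.exp (-(s * t)))) + a * Real.exp θ) / y0) := by
  set P := θ * (1 - Real.exp (-(s * t))) with hP
  have h := (((hasSum_exp_div P).mul_left b).add ((hasSum_exp_div θ).mul_left a)).div_const y0
  apply h.congr_fun
  intro k
  have h1 : ((Nat.factorial k : ℝ)) ≠ 0 := Nat.cast_ne_zero.mpr (Nat.factorial_ne_zero k)
  have key : ∀ u v : ℝ, (b * (u ^ k / (Nat.factorial k)) + a * (v ^ k / (Nat.factorial k))) / y0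
      = (b * u ^ k + a * v ^ k) / (y0 * Nat.factorial k) := by
    intro u v
    rw [div_eq_div_iff hy0 (mul_ne_zero hy0 h1)]
    field_simp
  rw [key]
  rfl

lemma Rfun_hasSum_mul (s θ a b y0 : ℝ) (hy0 : y0 ≠ 0) (t : ℝ) :
    HasSum (fun k : ℕ => (k : ℝ) * Rfun s θ a b y0 k t)
      ((b * ((θ * (1 - Real.exp (-(s * t)))) * Real.exp (θ * (1 - Real.exp (-(s * t)))))
        + a * (θ * Real.exp θ)) / y0) := by
  set P := θ * (1 - Real.exp (-(s * t))) with hP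
  have h := (((hasSum_mul_exp_div P).mul_left b).add
    ((hasSum_mul_exp_div θ).mul_left a)).div_const y0
  apply h.congr_fun
  intro k
  have h1 : ((Nat.factorial k : ℝ)) ≠ 0 := Nat.cast_ne_zero.mpr (Nat.factorial_ne_zero k)
  have key : ∀ u v : ℝ,
      (b * ((k : ℝ) * u ^ k / (Nat.factorial k)) + a * ((k : ℝ) * v ^ k / (Nat.factorial k))) / y0
      = (k : ℝ) * ((b * u ^ k + a * v ^ k) / (y0 * Nat.factorial k)) := by
    intro u v
    rw [mul_div_assoc' (k : ℝ), div_eq_div_iff hy0 (mul_ne_zero hy0 h1)]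
    field_simp
  rw [key]
  rfl

lemma Rfun_hasDerivAt (s θ a b y0 : ℝ) (hy0 : y0 ≠ 0) (k : ℕ) (t : ℝ) :
    HasDerivAt (fun u => Rfun s θ a b y0 k u)
      (-(s * k) * Rfun s θ a b y0 k t
        + (s * θ) * (if k = 0 then 0 else Rfun s θ a b y0 (k - 1) t)) t := by
  have hP : HasDerivAt (fun u : ℝ => θ * (1 - Real.exp (-(s * u))))
      (θ * (s * Real.exp (-(s * t)))) t := by
    have h1 : HasDerivAt (fun u : ℝ => -(s * u)) (-s) t := by
      simpa using (hasDerivAt_neg t).const_mul s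
    have h2 := h1.exp
    have h3 := (h2.const_sub 1).const_mul θ
    exact h3.congr_deriv (by ring)
  cases k with
  | zero =>
    have : (fun u : ℝ => Rfun s θ a b y0 0 u) = fun _ => (b + a) / (y0 * 1) := by
      funext u; simp [Rfun]
    rw [this]
    simpa using hasDerivAt_const t ((b + a) / (y0 * 1))
  | succ n =>
    have hpow := hP.pow (n + 1)
    have hD := ((hpow.const_mul b).add_const (a * θ ^ (n + 1))).div_const
      (y0 * Nat.factorial (n + 1))
    have hfun : (fun u => Rfun s θ a b y0 (n+1) u)
        = fun u => (b * (θ * (1 - Real.exp (-(s * u)))) ^ (n+1) + a * θ ^ (n+1))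
            / (y0 * Nat.factorial (n+1)) := rfl
    rw [hfun]
    refine hD.congr_deriv ?_
    have h1 : ((Nat.factorial n : ℝ)) ≠ 0 := Nat.cast_ne_zero.mpr (Nat.factorial_ne_zero n)
    have h2 : ((n : ℝ) + 1) ≠ 0 := by positivity
    simp only [Nat.succ_ne_zero, if_false, Nat.succ_sub_one, Rfun]
    rw [Nat.factorial_succ]
    push_cast
    field_simp
    ring


/-- Proposition 2 of Etheridge–Pfaffelhuber–Wakolbinger: for the relaxed
Poisson profile approximation, the mean at time Aτ is the affine function
M₁(y(Aτ)) = θ + (η/(e^η - 1))(1 - y₀(Aτ)/π₀) of the best-class frequency. -/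
theorem relaxed_PPA_mean
    (s lam : ℝ) (hs : 0 < s) (hlam : 0 < lam)
    (x : ℕ → ℝ → ℝ) (M : ℝ → ℝ)
    (hnn : ∀ k t, 0 ≤ x k t)
    (hprob : ∀ t, HasSum (fun k => x k t) 1)
    (hmom : ∀ (t ξ : ℝ), Summable (fun k : ℕ => x k t * Real.exp (ξ * k)))
    (hM : ∀ t, HasSum (fun k : ℕ => (k : ℝ) * x k t) (M t))
    (hODE : ∀ k t, HasDerivAt (fun u => x k u)
      ((s * (M t - k) - lam) * x k t +
        lam * (if k = 0 then 0 else x (k - 1) t)) t)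
    (hθ : 1 < lam / s)
    (y0 : ℝ) (hy0 : y0 ∈ Set.Ioo (0:ℝ) 1)
    (A : ℝ) (hA : 0 ≤ A)
    (hinit0 : x 0 0 = y0)
    (hinit : ∀ k : ℕ, x (k + 1) 0 =
      ((1 - y0) / (1 - Real.exp (-(lam / s)))) * poissonPMF (lam / s) (k + 1)) :
    M (A * (Real.log (lam / s) / s)) =
      lam / s +
        ((lam / s) ^ (1 - A) / (Real.exp ((lam / s) ^ (1 - A)) - 1)) *
          (1 - x 0 (A * (Real.log (lam / s) / s)) / Real.exp (-(lam / s))) := by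
  clear hnn hmom
  obtain ⟨hy0pos, hy0lt⟩ := hy0
  have hy0ne : y0 ≠ 0 := ne_of_gt hy0pos
  set θ := lam / s with hθdef
  have hθpos : (0:ℝ) < θ := lt_trans one_pos hθ
  have hlamθ : lam = s * θ := by
    rw [hθdef]; field_simp
  have hexpθlt : Real.exp (-θ) < 1 := by
    rw [Real.exp_lt_one_iff]; linarith
  have hden1 : (1:ℝ) - Real.exp (-θ) ≠ 0 := ne_of_gt (by linarith)
  set a := (1 - y0) * Real.exp (-θ) / (1 - Real.exp (-θ)) with ha
  set b := y0 - a with hb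
  set T := A * (Real.log θ / s) with hT
  have hlogθ : 0 < Real.log θ := Real.log_pos hθ
  have hTnn : 0 ≤ T := by
    rw [hT]; positivity
  set R := Rfun s θ a b y0 with hRdef
  have hR0 : ∀ u : ℝ, R 0 u = 1 := by
    intro u
    simp only [hRdef, Rfun, pow_zero, Nat.factorial_zero, Nat.cast_one, mul_one]
    rw [hb]
    field_simp
    ring
  -- initial condition matches
  have hinitR : ∀ k, x k 0 = y0 * R k 0 := by
    intro k
    cases k with
    | zero => rw [hinit0, hR0]; ring
    | succ n =>
      rw [hinit n]
      simp only [hRdef, Rfun, poissonPMF]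
      rw [mul_zero, neg_zero, Real.exp_zero, sub_self, mul_zero,
        zero_pow (Nat.succ_ne_zero n), mul_zero, zero_add, ha]
      have hfne : ((Nat.factorial (n+1) : ℝ)) ≠ 0 :=
        Nat.cast_ne_zero.mpr (Nat.factorial_ne_zero (n+1))
      field_simp
  -- every x k is continuous
  have hcont : ∀ k, Continuous (x k) := fun k =>
    continuous_iff_continuousAt.mpr (fun t => (hODE k t).continuousAt)
  -- main uniqueness statement on intervals of positivity of x 0
  have key : ∀ t, 0 ≤ t → (∀ u ∈ Set.Icc (0:ℝ) t, 0 < x 0 u) →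
      ∀ k, ∀ u ∈ Set.Icc (0:ℝ) t, x k u = x 0 u * R k u := by
    intro t ht hpos k
    induction k with
    | zero => intro u _; rw [hR0]; ring
    | succ n ih =>
      set F : ℝ → ℝ :=
        fun u => Real.exp (s * ((n:ℝ)+1) * u) * (x (n+1) u / x 0 u - R (n+1) u) with hF
      have hFderiv : ∀ u ∈ Set.Icc (0:ℝ) t, HasDerivAt F 0 u := by
        intro u hu
        have hxne : x 0 u ≠ 0 := ne_of_gt (hpos u hu)
        have hd0 : HasDerivAt (fun v => x 0 v) ((s * M u - lam) * x 0 u) u := by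
          have h := hODE 0 u
          simpa using h
        have hdn : HasDerivAt (fun v => x (n+1) v)
            ((s * (M u - ((n:ℝ)+1)) - lam) * x (n+1) u + lam * x n u) u := by
          have h := hODE (n+1) u
          simp only [Nat.succ_ne_zero, if_false, Nat.succ_sub_one] at h
          convert h using 2
          push_cast
          ring
        have hq := hdn.div hd0 hxne
        have hRd := Rfun_hasDerivAt s θ a b y0 hy0ne (n+1) u
        simp only [Nat.succ_ne_zero, if_false, Nat.succ_sub_one] at hRd
        rw [← hRdef] at hRd
        have hE : HasDerivAt (fun v : ℝ => Real.exp (s * ((n:ℝ)+1) * v))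
            (Real.exp (s * ((n:ℝ)+1) * u) * (s * ((n:ℝ)+1))) u := by
          have h1 : HasDerivAt (fun v : ℝ => s * ((n:ℝ)+1) * v) (s * ((n:ℝ)+1)) u := by
            simpa using (hasDerivAt_id u).const_mul (s * ((n:ℝ)+1))
          exact h1.exp
        have hcomb := hE.mul (hq.sub hRd)
        have hxn := ih u hu
        refine hcomb.congr_deriv ?_
        simp only [Pi.sub_apply, Pi.div_apply]
        rw [hxn, hlamθ]
        push_cast
        field_simp
        ring
      have hFcont : ContinuousOn F (Set.Icc 0 t) :=
        fun u hu => ((hFderiv u hu).continuousAt).continuousWithinAt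
      have hF0 : F 0 = 0 := by
        rw [hF]
        simp only
        rw [hinitR (n+1), hinit0]
        field_simp
        ring
      have hconst := constant_of_has_deriv_right_zero hFcont
        (fun u hu => (hFderiv u (Set.Ico_subset_Icc_self hu)).hasDerivWithinAt)
      intro u hu
      have hFu : F u = 0 := by rw [hconst u hu, hF0]
      have hxne : x 0 u ≠ 0 := ne_of_gt (hpos u hu)
      rw [hF] at hFu
      simp only at hFu
      rcases mul_eq_zero.mp hFu with h | h
      · exact absurd h (Real.exp_ne_zero _)
      · have h3 : x (n+1) u / x 0 u = R (n+1) u := by linarith [sub_eq_zero.mp h]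
        rw [← h3]
        field_simp
  -- the normalization identity on positivity intervals
  have hprod : ∀ t, 0 ≤ t → (∀ u ∈ Set.Icc (0:ℝ) t, 0 < x 0 u) →
      x 0 t * ((b * Real.exp (θ * (1 - Real.exp (-(s * t)))) + a * Real.exp θ) / y0) = 1 := by
    intro t ht hpos
    have hx := key t ht hpos
    have hfun : (fun k : ℕ => x k t) = fun k => x 0 t * R k t :=
      funext fun k => hx k t ⟨ht, le_refl t⟩
    have h1 : HasSum (fun k => x 0 t * R k t) 1 := by
      rw [← hfun]; exact hprob t
    exact ((Rfun_hasSum s θ a b y0 hy0ne t).mul_left (x 0 t)).unique h1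
  -- positivity of x 0 on [0, T]
  have hx0pos : ∀ u ∈ Set.Icc (0:ℝ) T, 0 < x 0 u := by
    by_contra hcon
    push_neg at hcon
    obtain ⟨u0, hu0, hu0le⟩ := hcon
    set K := {u : ℝ | u ∈ Set.Icc (0:ℝ) T ∧ x 0 u ≤ 0} with hK
    have hKne : K.Nonempty := ⟨u0, hu0, hu0le⟩
    have hKcl : IsClosed K := by
      have : K = Set.Icc (0:ℝ) T ∩ (x 0) ⁻¹' (Set.Iic 0) := rfl
      rw [this]
      exact isClosed_Icc.inter (IsClosed.preimage (hcont 0) isClosed_Iic)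
    have hKbdd : BddBelow K := ⟨0, fun v hv => hv.1.1⟩
    set t0 := sInf K with ht0
    have ht0mem : t0 ∈ K := hKcl.csInf_mem hKne hKbdd
    have ht0pos : 0 < t0 := by
      rcases lt_or_eq_of_le ht0mem.1.1 with h | h
      · exact h
      · exfalso
        have h2 := ht0mem.2
        rw [← h, hinit0] at h2
        linarith
    have hbefore : ∀ u, 0 ≤ u → u < t0 → 0 < x 0 u := by
      intro u h0u hut0
      by_contra hle
      push_neg at hle
      have hmem : u ∈ K := ⟨⟨h0u, le_trans (le_of_lt hut0) ht0mem.1.2⟩, hle⟩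
      have := csInf_le hKbdd hmem
      rw [← ht0] at this
      linarith
    set G : ℝ → ℝ := fun u =>
      x 0 u * ((b * Real.exp (θ * (1 - Real.exp (-(s * u)))) + a * Real.exp θ) / y0) with hG
    have hGcont : Continuous G := by
      apply (hcont 0).mul
      apply Continuous.div_const
      apply Continuous.add _ continuous_const
      apply Continuous.mul continuous_const
      apply Real.continuous_exp.comp
      apply Continuous.mul continuous_const
      apply Continuous.sub continuous_const
      exact Real.continuous_exp.comp ((continuous_const.mul continuous_id).neg)
    have htend : Filter.Tendsto G (nhdsWithin t0 (Set.Iio t0)) (nhds (G t0)) :=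
      (hGcont.continuousAt).continuousWithinAt
    have hev : G =ᶠ[nhdsWithin t0 (Set.Iio t0)] (fun _ => (1:ℝ)) := by
      filter_upwards [Ioo_mem_nhdsLT ht0pos] with u hu
      exact hprod u (le_of_lt hu.1)
        (fun v hv => hbefore v hv.1 (lt_of_le_of_lt hv.2 hu.2))
    have hG1 : G t0 = 1 :=
      tendsto_nhds_unique (Filter.Tendsto.congr' hev htend) tendsto_const_nhds
    -- but x 0 t0 = 0
    have hxt0 : x 0 t0 = 0 := by
      have hge : 0 ≤ x 0 t0 := by
        have htx : Filter.Tendsto (x 0) (nhdsWithin t0 (Set.Iio t0)) (nhds (x 0 t0)) :=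
          ((hcont 0).continuousAt).continuousWithinAt
        refine ge_of_tendsto htx ?_
        filter_upwards [Ioo_mem_nhdsLT ht0pos] with u hu
        exact le_of_lt (hbefore u (le_of_lt hu.1) hu.2)
      linarith [ht0mem.2]
    have hfalse : (0:ℝ) * ((b * Real.exp (θ * (1 - Real.exp (-(s * t0)))) + a * Real.exp θ) / y0)
        = 1 := by
      rw [← hxt0]; exact hG1
    rw [zero_mul] at hfalse
    exact absurd hfalse (by norm_num)
  -- evaluate at T
  have hfin := key T hTnn hx0pos
  have hTT : T ∈ Set.Icc (0:ℝ) T := ⟨hTnn, le_refl T⟩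
  have heq1 := hprod T hTnn hx0pos
  have heq2 : M T = x 0 T *
      ((b * ((θ * (1 - Real.exp (-(s * T)))) * Real.exp (θ * (1 - Real.exp (-(s * T)))))
        + a * (θ * Real.exp θ)) / y0) := by
    have h1 := hM T
    have hfun : (fun k : ℕ => (k:ℝ) * x k T) = fun k : ℕ => x 0 T * ((k:ℝ) * R k T) :=
      funext fun k => by rw [hfin k T hTT]; ring
    rw [hfun] at h1
    exact h1.unique ((Rfun_hasSum_mul s θ a b y0 hy0ne T).mul_left (x 0 T))
  -- compute P T = θ - η
  set η := θ ^ (1 - A) with hη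
  have hPT : θ * (1 - Real.exp (-(s * T))) = θ - η := by
    have h1 : -(s * T) = Real.log θ * (-A) := by
      rw [hT]; field_simp
    rw [h1, ← Real.rpow_def_of_pos hθpos]
    have h3 : θ * θ ^ (-A) = η := by
      rw [hη]
      have h4 : (1:ℝ) - A = 1 + -A := by ring
      rw [h4, Real.rpow_add hθpos, Real.rpow_one]
    rw [mul_sub, mul_one, h3]
  rw [hPT] at heq1 heq2
  have hηpos : 0 < η := Real.rpow_pos_of_pos hθpos _
  have hEη : 1 < Real.exp η := by
    calc (1:ℝ) = Real.exp 0 := Real.exp_zero.symm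
    _ < Real.exp η := Real.exp_lt_exp.mpr hηpos
  have hEηne : Real.exp η - 1 ≠ 0 := ne_of_gt (by linarith)
  have hsplit : Real.exp θ = Real.exp (θ - η) * Real.exp η := by
    rw [← Real.exp_add]; ring_nf
  -- key algebraic identity between the two sums
  have hkey : (b * ((θ - η) * Real.exp (θ - η)) + a * (θ * Real.exp θ)) / y0
      = θ * ((b * Real.exp (θ - η) + a * Real.exp θ) / y0)
        + (η / (Real.exp η - 1)) * ((b * Real.exp (θ - η) + a * Real.exp θ) / y0
            - Real.exp θ) := by
    rw [hb, hsplit]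
    field_simp
    ring
  -- finish
  have hgoal : ∀ c : ℝ, c / Real.exp (-θ) = c * Real.exp θ := by
    intro c; rw [Real.exp_neg]; field_simp
  rw [heq2, hkey, hgoal]
  linear_combination (θ + η / (Real.exp η - 1)) * heq1
end
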